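/- arXiv:1112.0207 — 6 statements merged into one kernel-verified Lean document; each statement's English description precedes it below -/
import Mathlib

section
/- Let u be a C^∞ function on the closure of Ω satisfying −Δu = u, and set φ = ∇u := u_x + i u_y. Then along ∂Ω the normal derivative of φ satisfies ∂φ/∂n = e^{iθ(s)} · [ i( d²(u∘z)/ds² + u∘z ) + κ(s) · d(u∘z)/ds + (−iκ(s) + d/ds)( (∂u/∂n)∘z ) ], where κ(s) = −dθ/ds is the curvature of ∂Ω. -/
noncomputable section
open Real MeasureTheory ComplexConjugate

/-- Partial derivative in the `x` direction. -/
def pdx (u : ℝ × ℝ → ℝ) (p : ℝ × ℝ) : ℝ := fderiv ℝ u p (1, 0)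

/-- Partial derivative in the `y` direction. -/
def pdy (u : ℝ × ℝ → ℝ) (p : ℝ × ℝ) : ℝ := fderiv ℝ u p (0, 1)

/-- The Laplacian on `ℝ²`. -/
def lap (u : ℝ × ℝ → ℝ) (p : ℝ × ℝ) : ℝ := pdx (pdx u) p + pdy (pdy u) p

/-- Partial derivative in the `x` direction, for complex-valued functions. -/
def pdxC (u : ℝ × ℝ → ℂ) (p : ℝ × ℝ) : ℂ := fderiv ℝ u p (1, 0)

/-- Partial derivative in the `y` direction, for complex-valued functions. -/
def pdyC (u : ℝ × ℝ → ℂ) (p : ℝ × ℝ) : ℂ := fderiv ℝ u p (0, 1)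

/-- Normal derivative with respect to the outward unit normal
`n = (sin θ, -cos θ)`, where `θ` is the tangent angle at the boundary point. -/
def nderiv (th : ℝ) (u : ℝ × ℝ → ℝ) (p : ℝ × ℝ) : ℝ :=
  Real.sin th * pdx u p - Real.cos th * pdy u p

/-- Normal derivative for complex-valued functions. -/
def nderivC (th : ℝ) (u : ℝ × ℝ → ℂ) (p : ℝ × ℝ) : ℂ :=
  (Real.sin th : ℂ) * pdxC u p - (Real.cos th : ℂ) * pdyC u p

/-- The rotation generator `R = -y ∂/∂x + x ∂/∂y`. -/
def Rop (u : ℝ × ℝ → ℝ) (p : ℝ × ℝ) : ℝ := -p.2 * pdx u p + p.1 * pdy u p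

/-- The scaling generator `S = x ∂/∂x + y ∂/∂y`. -/
def Sop (u : ℝ × ℝ → ℝ) (p : ℝ × ℝ) : ℝ := p.1 * pdx u p + p.2 * pdy u p

/-- `Ω` is a (Euclidean) disk. -/
def IsDisk (Om : Set (ℝ × ℝ)) : Prop :=
  ∃ z : ℝ × ℝ, ∃ r : ℝ, 0 < r ∧
    Om = {p : ℝ × ℝ | (p.1 - z.1) ^ 2 + (p.2 - z.2) ^ 2 < r ^ 2}

/-- `u` is `C^∞` on the closure of `Ω` (i.e. on an open neighborhood of it). -/
def SmoothNearClosure (Om : Set (ℝ × ℝ)) (u : ℝ × ℝ → ℝ) : Prop :=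
  ∃ U : Set (ℝ × ℝ), IsOpen U ∧ closure Om ⊆ U ∧ ContDiffOn ℝ (⊤ : ℕ∞) u U

/-- Complexified gradient `∇u = u_x + i u_y`. -/
def gradC (u : ℝ × ℝ → ℝ) (p : ℝ × ℝ) : ℂ :=
  (pdx u p : ℂ) + Complex.I * (pdy u p : ℂ)

/-- Complexified conjugate gradient `∇̄u = u_x - i u_y`. -/
def gradbarC (u : ℝ × ℝ → ℝ) (p : ℝ × ℝ) : ℂ :=
  (pdx u p : ℂ) - Complex.I * (pdy u p : ℂ)

/-- The bilinear form `B(φ, ψ; λ) = ∫∫_Ω (φ_x ψ̄_x + φ_y ψ̄_y - λ φ ψ̄)`. -/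
def Bform (Om : Set (ℝ × ℝ)) (lam : ℝ) (phi psi : ℝ × ℝ → ℂ) : ℂ :=
  ∫ p in Om, (pdxC phi p * conj (pdxC psi p) + pdyC phi p * conj (pdyC psi p)
    - (lam : ℂ) * phi p * conj (psi p))



private lemma chain_hasDerivAt (f : ℝ × ℝ → ℝ) (γ : ℝ → ℝ × ℝ) (c s : ℝ) (t : ℝ)
    (hf : DifferentiableAt ℝ f (γ t)) (hγ : HasDerivAt γ (c, s) t) :
    HasDerivAt (fun τ => f (γ τ)) (c * pdx f (γ t) + s * pdy f (γ t)) t := by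
  have h := hf.hasFDerivAt.comp_hasDerivAt t hγ
  refine h.congr_deriv ?_
  have : (c, s) = c • ((1:ℝ), (0:ℝ)) + s • ((0:ℝ), (1:ℝ)) := by simp [Prod.ext_iff]
  rw [this, map_add, (fderiv ℝ f (γ t)).map_smul, (fderiv ℝ f (γ t)).map_smul]
  simp [pdx, pdy]

private lemma pdxC_gradC (u : ℝ × ℝ → ℝ) (p : ℝ × ℝ) (h1 : DifferentiableAt ℝ (pdx u) p)
    (h2 : DifferentiableAt ℝ (pdy u) p) :
    pdxC (gradC u) p = (pdx (pdx u) p : ℂ) + Complex.I * (pdx (pdy u) p : ℂ) := by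
  have H1 : HasFDerivAt (fun q => ((pdx u q : ℂ)))
      (Complex.ofRealCLM.comp (fderiv ℝ (pdx u) p)) p :=
    Complex.ofRealCLM.hasFDerivAt.comp p h1.hasFDerivAt
  have H2 : HasFDerivAt (fun q => ((pdy u q : ℂ)))
      (Complex.ofRealCLM.comp (fderiv ℝ (pdy u) p)) p :=
    Complex.ofRealCLM.hasFDerivAt.comp p h2.hasFDerivAt
  have H : HasFDerivAt (gradC u)
      (Complex.ofRealCLM.comp (fderiv ℝ (pdx u) p)
        + Complex.I • Complex.ofRealCLM.comp (fderiv ℝ (pdy u) p)) p :=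
    H1.add (H2.const_mul Complex.I)
  rw [pdxC, H.fderiv]
  simp [pdx, pdxC]

private lemma pdyC_gradC (u : ℝ × ℝ → ℝ) (p : ℝ × ℝ) (h1 : DifferentiableAt ℝ (pdx u) p)
    (h2 : DifferentiableAt ℝ (pdy u) p) :
    pdyC (gradC u) p = (pdy (pdx u) p : ℂ) + Complex.I * (pdy (pdy u) p : ℂ) := by
  have H1 : HasFDerivAt (fun q => ((pdx u q : ℂ)))
      (Complex.ofRealCLM.comp (fderiv ℝ (pdx u) p)) p :=
    Complex.ofRealCLM.hasFDerivAt.comp p h1.hasFDerivAt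
  have H2 : HasFDerivAt (fun q => ((pdy u q : ℂ)))
      (Complex.ofRealCLM.comp (fderiv ℝ (pdy u) p)) p :=
    Complex.ofRealCLM.hasFDerivAt.comp p h2.hasFDerivAt
  have H : HasFDerivAt (gradC u)
      (Complex.ofRealCLM.comp (fderiv ℝ (pdx u) p)
        + Complex.I • Complex.ofRealCLM.comp (fderiv ℝ (pdy u) p)) p :=
    H1.add (H2.const_mul Complex.I)
  rw [pdyC, H.fderiv]
  simp [pdy, pdyC]

private lemma pdx_pdy_symm (u : ℝ × ℝ → ℝ) (p : ℝ × ℝ) (hu : ContDiffAt ℝ (⊤ : ℕ∞) u p) :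
    pdx (pdy u) p = pdy (pdx u) p := by
  have hsym : IsSymmSndFDerivAt ℝ u p := hu.isSymmSndFDerivAt (by rw [minSmoothness_of_isRCLikeNormedField]; exact WithTop.coe_le_coe.mpr (le_top : (2 : ℕ∞) ≤ ⊤))
  have hd : DifferentiableAt ℝ (fderiv ℝ u) p :=
    (hu.fderiv_right (m := (⊤ : ℕ∞)) (by simp)).differentiableAt (by simp)
  have key : ∀ v w : ℝ × ℝ, fderiv ℝ (fun q => fderiv ℝ u q v) p w
      = fderiv ℝ (fderiv ℝ u) p w v := by
    intro v w
    have := ((ContinuousLinearMap.apply ℝ ℝ v).hasFDerivAt.comp p hd.hasFDerivAt).fderiv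
    rw [show (fun q => fderiv ℝ u q v)
        = (ContinuousLinearMap.apply ℝ ℝ v) ∘ (fderiv ℝ u) from rfl, this]
    rfl
  show fderiv ℝ (fun q => fderiv ℝ u q (0,1)) p (1,0)
      = fderiv ℝ (fun q => fderiv ℝ u q (1,0)) p (0,1)
  rw [key, key, hsym]

/-- Normal derivative of `φ = ∇u` on the boundary:
`∂φ/∂n = e^{iθ} [ i((u∘z)'' + u∘z) + κ (u∘z)' + (-iκ + d/ds)(∂u/∂n ∘ z) ]`,
where `κ = -θ'`. -/
theorem normal_derivative_of_grad
    (Om : Set (ℝ × ℝ)) (hopen : IsOpen Om) (hconn : IsConnected Om)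
    (hbdd : Bornology.IsBounded Om)
    (L : ℝ) (hL : 0 < L)
    (γ : ℝ → ℝ × ℝ) (θ : ℝ → ℝ)
    (hγsmooth : ContDiff ℝ (⊤ : ℕ∞) γ) (hθsmooth : ContDiff ℝ (⊤ : ℕ∞) θ)
    (hγper : ∀ s, γ (s + L) = γ s)
    (hθper : ∀ s, θ (s + L) = θ s + 2 * π)
    (hrange : Set.range γ = frontier Om)
    (hinj : Set.InjOn γ (Set.Ico 0 L))
    (hγderiv : ∀ s, deriv γ s = (Real.cos (θ s), Real.sin (θ s)))
    (u : ℝ × ℝ → ℝ)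
    (husmooth : SmoothNearClosure Om u)
    (hupde : ∀ p ∈ closure Om, - lap u p = u p)
    (s : ℝ) :
    nderivC (θ s) (gradC u) (γ s)
      = Complex.exp (Complex.I * (θ s : ℂ)) *
        (Complex.I * ((deriv (deriv (fun t => u (γ t))) s : ℂ) + (u (γ s) : ℂ))
          + ((-deriv θ s : ℝ) : ℂ) * (deriv (fun t => u (γ t)) s : ℂ)
          + (-Complex.I * ((-deriv θ s : ℝ) : ℂ) * (nderiv (θ s) u (γ s) : ℂ)
              + (deriv (fun t => nderiv (θ t) u (γ t)) s : ℂ))) := by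
  obtain ⟨U, hUopen, hUsub, hUsm⟩ := husmooth
  have hmem : ∀ t, γ t ∈ U := fun t =>
    hUsub (frontier_subset_closure (hrange ▸ Set.mem_range_self t))
  have hCu : ∀ t, ContDiffAt ℝ (⊤ : ℕ∞) u (γ t) := fun t =>
    hUsm.contDiffAt (hUopen.mem_nhds (hmem t))
  have hCx : ∀ t, ContDiffAt ℝ (⊤ : ℕ∞) (pdx u) (γ t) := fun t =>
    (((hCu t).fderiv_right (m := (⊤ : ℕ∞)) (by simp)).clm_apply contDiffAt_const)
  have hCy : ∀ t, ContDiffAt ℝ (⊤ : ℕ∞) (pdy u) (γ t) := fun t =>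
    (((hCu t).fderiv_right (m := (⊤ : ℕ∞)) (by simp)).clm_apply contDiffAt_const)
  have hDu : ∀ t, DifferentiableAt ℝ u (γ t) := fun t => (hCu t).differentiableAt (by simp)
  have hDx : ∀ t, DifferentiableAt ℝ (pdx u) (γ t) := fun t => (hCx t).differentiableAt (by simp)
  have hDy : ∀ t, DifferentiableAt ℝ (pdy u) (γ t) := fun t => (hCy t).differentiableAt (by simp)
  have hγ' : ∀ t, HasDerivAt γ (Real.cos (θ t), Real.sin (θ t)) t := fun t => by
    have := (hγsmooth.differentiable (by simp) t).hasDerivAt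
    rwa [hγderiv t] at this
  have hθ' : ∀ t, HasDerivAt θ (deriv θ t) t := fun t =>
    (hθsmooth.differentiable (by simp) t).hasDerivAt
  -- first derivative of u ∘ γ
  have hu1 : deriv (fun t => u (γ t))
      = fun t => Real.cos (θ t) * pdx u (γ t) + Real.sin (θ t) * pdy u (γ t) :=
    funext fun t => (chain_hasDerivAt u γ _ _ t (hDu t) (hγ' t)).deriv
  -- HasDerivAt for the pieces at s
  have hcos : HasDerivAt (fun t => Real.cos (θ t)) (-Real.sin (θ s) * deriv θ s) s :=
    (hθ' s).cos
  have hsin : HasDerivAt (fun t => Real.sin (θ t)) (Real.cos (θ s) * deriv θ s) s :=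
    (hθ' s).sin
  have hP : HasDerivAt (fun t => pdx u (γ t))
      (Real.cos (θ s) * pdx (pdx u) (γ s) + Real.sin (θ s) * pdy (pdx u) (γ s)) s :=
    chain_hasDerivAt (pdx u) γ _ _ s (hDx s) (hγ' s)
  have hQ : HasDerivAt (fun t => pdy u (γ t))
      (Real.cos (θ s) * pdx (pdy u) (γ s) + Real.sin (θ s) * pdy (pdy u) (γ s)) s :=
    chain_hasDerivAt (pdy u) γ _ _ s (hDy s) (hγ' s)
  -- second derivative of u ∘ γ at s (complexified)
  have hu1C : deriv (fun t => ((u (γ t) : ℂ)))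
      = fun t => (((Real.cos (θ t) * pdx u (γ t) + Real.sin (θ t) * pdy u (γ t) : ℝ)) : ℂ) :=
    funext fun t => ((chain_hasDerivAt u γ _ _ t (hDu t) (hγ' t)).ofReal_comp).deriv
  have hu2 : deriv (deriv (fun t => ((u (γ t) : ℂ)))) s
      = Complex.ofReal ((-Real.sin (θ s) * deriv θ s) * pdx u (γ s)
        + Real.cos (θ s) * (Real.cos (θ s) * pdx (pdx u) (γ s)
            + Real.sin (θ s) * pdy (pdx u) (γ s))
        + ((Real.cos (θ s) * deriv θ s) * pdy u (γ s)
        + Real.sin (θ s) * (Real.cos (θ s) * pdx (pdy u) (γ s)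
            + Real.sin (θ s) * pdy (pdy u) (γ s)))) := by
    rw [hu1C]
    exact (((hcos.mul hP).add (hsin.mul hQ)).ofReal_comp).deriv
  have hu1s : deriv (fun t => ((u (γ t) : ℂ))) s
      = Complex.ofReal (Real.cos (θ s) * pdx u (γ s) + Real.sin (θ s) * pdy u (γ s)) := by
    rw [hu1C]
  -- derivative of the normal derivative along the curve
  have hn1 : deriv (fun t => ((nderiv (θ t) u (γ t) : ℂ))) s
      = Complex.ofReal (((Real.cos (θ s) * deriv θ s) * pdx u (γ s)
          + Real.sin (θ s) * (Real.cos (θ s) * pdx (pdx u) (γ s)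
              + Real.sin (θ s) * pdy (pdx u) (γ s)))
        - ((-Real.sin (θ s) * deriv θ s) * pdy u (γ s)
          + Real.cos (θ s) * (Real.cos (θ s) * pdx (pdy u) (γ s)
              + Real.sin (θ s) * pdy (pdy u) (γ s)))) := by
    have heq : (fun t => ((nderiv (θ t) u (γ t) : ℂ)))
        = fun t => (((Real.sin (θ t) * pdx u (γ t) - Real.cos (θ t) * pdy u (γ t) : ℝ)) : ℂ) := rfl
    rw [heq]
    exact (((hsin.mul hP).sub (hcos.mul hQ)).ofReal_comp).deriv
  -- PDE at γ s
  have hpde : pdx (pdx u) (γ s) + pdy (pdy u) (γ s) = -u (γ s) := by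
    have := hupde (γ s) (frontier_subset_closure (hrange ▸ Set.mem_range_self s))
    simp only [lap] at this
    linarith
  -- symmetry of second derivatives
  have hsymm : pdx (pdy u) (γ s) = pdy (pdx u) (γ s) := pdx_pdy_symm u (γ s) (hCu s)
  -- complexified partials of the gradient
  have hx := pdxC_gradC u (γ s) (hDx s) (hDy s)
  have hy := pdyC_gradC u (γ s) (hDx s) (hDy s)
  -- unfold everything
  rw [show nderivC (θ s) (gradC u) (γ s)
      = (Real.sin (θ s) : ℂ) * pdxC (gradC u) (γ s)
        - (Real.cos (θ s) : ℂ) * pdyC (gradC u) (γ s) from rfl,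
    hx, hy, hu2, hu1s, hn1, hsymm, mul_comm Complex.I ((θ s : ℝ) : ℂ),
    Complex.exp_mul_I, ← Complex.ofReal_cos, ← Complex.ofReal_sin,
    show nderiv (θ s) u (γ s)
      = Real.sin (θ s) * pdx u (γ s) - Real.cos (θ s) * pdy u (γ s) from rfl]
  have hpyth : (Complex.cos ((θ s : ℝ) : ℂ))^2 + (Complex.sin ((θ s : ℝ) : ℂ))^2 = 1 :=
    Complex.cos_sq_add_sin_sq _
  have hpdeC : ((pdx (pdx u) (γ s) : ℂ)) + ((pdy (pdy u) (γ s) : ℂ)) + (u (γ s) : ℂ) = 0 := by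
    have h : pdx (pdx u) (γ s) + pdy (pdy u) (γ s) + u (γ s) = 0 := by linarith
    exact_mod_cast h
  push_cast
  linear_combination
    (-Complex.I * Complex.cos ((θ s : ℝ) : ℂ) * (pdx (pdx u) (γ s) : ℂ)
      - Complex.I * Complex.sin ((θ s : ℝ) : ℂ) * (pdy (pdx u) (γ s) : ℂ)
      + Complex.cos ((θ s : ℝ) : ℂ) * (pdy (pdx u) (γ s) : ℂ)
      + Complex.sin ((θ s : ℝ) : ℂ) * (pdy (pdy u) (γ s) : ℂ)) * hpyth
    + (Complex.sin ((θ s : ℝ) : ℂ) - Complex.I * Complex.cos ((θ s : ℝ) : ℂ)) * hpdeC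
    + (-(Complex.sin ((θ s : ℝ) : ℂ) * (pdx (pdx u) (γ s) : ℂ) * Complex.cos ((θ s : ℝ) : ℂ)^2
        + Complex.sin ((θ s : ℝ) : ℂ) * (u (γ s) : ℂ)
        + 2 * Complex.sin ((θ s : ℝ) : ℂ)^2 * (pdy (pdx u) (γ s) : ℂ) * Complex.cos ((θ s : ℝ) : ℂ)
        + Complex.sin ((θ s : ℝ) : ℂ)^3 * (pdy (pdy u) (γ s) : ℂ))) * Complex.I_sq
end
end

section
/- Let u be a C^∞ function on the closure of Ω satisfying −Δu = u, and set ψ = ∇̄u := u_x − i u_y. Then along ∂Ω: ψ(z(s)) = e^{−iθ(s)} · [ d(u∘z)/ds + i (∂u/∂n)∘z ], and ∂ψ/∂n = e^{−iθ(s)} · [ κ(s) · d(u∘z)/ds − i( d²(u∘z)/ds² + u∘z ) + (iκ(s) + d/ds)( (∂u/∂n)∘z ) ]. -/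
noncomputable section
open Real MeasureTheory ComplexConjugate

private lemma pair_decomp {F : Type*} [NormedAddCommGroup F] [NormedSpace ℝ F]
    (L : (ℝ × ℝ) →L[ℝ] F) (a b : ℝ) : L (a, b) = a • L (1, 0) + b • L (0, 1) := by
  rw [show ((a,b) : ℝ×ℝ) = a • ((1:ℝ), (0:ℝ)) + b • ((0:ℝ), (1:ℝ)) by simp [Prod.ext_iff],
    map_add, L.map_smul, L.map_smul]

/-- Boundary data of `ψ = ∇̄u = u_x - i u_y`:
`ψ(z(s)) = e^{-iθ} [(u∘z)' + i ∂u/∂n∘z]` and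
`∂ψ/∂n = e^{-iθ} [κ (u∘z)' - i((u∘z)'' + u∘z) + (iκ + d/ds)(∂u/∂n∘z)]`. -/
theorem boundary_data_of_gradbar
    (Om : Set (ℝ × ℝ)) (hopen : IsOpen Om) (hconn : IsConnected Om)
    (hbdd : Bornology.IsBounded Om)
    (L : ℝ) (hL : 0 < L)
    (γ : ℝ → ℝ × ℝ) (θ : ℝ → ℝ)
    (hγsmooth : ContDiff ℝ (⊤ : ℕ∞) γ) (hθsmooth : ContDiff ℝ (⊤ : ℕ∞) θ)
    (hγper : ∀ s, γ (s + L) = γ s)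
    (hθper : ∀ s, θ (s + L) = θ s + 2 * π)
    (hrange : Set.range γ = frontier Om)
    (hinj : Set.InjOn γ (Set.Ico 0 L))
    (hγderiv : ∀ s, deriv γ s = (Real.cos (θ s), Real.sin (θ s)))
    (u : ℝ × ℝ → ℝ)
    (husmooth : SmoothNearClosure Om u)
    (hupde : ∀ p ∈ closure Om, - lap u p = u p)
    (s : ℝ) :
    gradbarC u (γ s)
      = Complex.exp (-Complex.I * (θ s : ℂ)) *
        ((deriv (fun t => u (γ t)) s : ℂ)
          + Complex.I * (nderiv (θ s) u (γ s) : ℂ))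
    ∧ nderivC (θ s) (gradbarC u) (γ s)
      = Complex.exp (-Complex.I * (θ s : ℂ)) *
        (((-deriv θ s : ℝ) : ℂ) * (deriv (fun t => u (γ t)) s : ℂ)
          - Complex.I * ((deriv (deriv (fun t => u (γ t))) s : ℂ) + (u (γ s) : ℂ))
          + (Complex.I * ((-deriv θ s : ℝ) : ℂ) * (nderiv (θ s) u (γ s) : ℂ)
              + (deriv (fun t => nderiv (θ t) u (γ t)) s : ℂ))) := by

  obtain ⟨U, hUopen, hUsub, hsm⟩ := husmooth
  have hγU : ∀ t, γ t ∈ U := fun t =>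
    hUsub (frontier_subset_closure (hrange ▸ Set.mem_range_self t))
  have hcd : ∀ q ∈ U, ContDiffAt ℝ (⊤ : ℕ∞) u q := fun q hq => hsm.contDiffAt (hUopen.mem_nhds hq)
  have hu2 : ∀ t, HasFDerivAt (fderiv ℝ u) (fderiv ℝ (fderiv ℝ u) (γ t)) (γ t) := fun t =>
    (((hcd _ (hγU t)).fderiv_right (m := (⊤ : ℕ∞)) (by simp)).differentiableAt (by simp)).hasFDerivAt
  have hγd : ∀ t, HasDerivAt γ (Real.cos (θ t), Real.sin (θ t)) t := fun t => by
    have h := (hγsmooth.differentiable (by simp) t).hasDerivAt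
    rwa [hγderiv t] at h
  have hθd : ∀ t, HasDerivAt θ (deriv θ t) t := fun t =>
    (hθsmooth.differentiable (by simp) t).hasDerivAt
  -- first derivatives along the curve
  have hTt : ∀ t, HasDerivAt (fun t => u (γ t))
      (Real.cos (θ t) * pdx u (γ t) + Real.sin (θ t) * pdy u (γ t)) t := fun t => by
    have h := (((hcd _ (hγU t)).differentiableAt (by simp)).hasFDerivAt).comp_hasDerivAt t (hγd t)
    have he : fderiv ℝ u (γ t) (Real.cos (θ t), Real.sin (θ t))
        = Real.cos (θ t) * pdx u (γ t) + Real.sin (θ t) * pdy u (γ t) := by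
      rw [pair_decomp (fderiv ℝ u (γ t)) (Real.cos (θ t)) (Real.sin (θ t))]; simp [pdx, pdy]
    rwa [he] at h
  -- derivative of the gradient along the curve
  have hDuγ : ∀ t, HasDerivAt (fun t => fderiv ℝ u (γ t))
      (fderiv ℝ (fderiv ℝ u) (γ t) (Real.cos (θ t), Real.sin (θ t))) t := fun t =>
    (hu2 t).comp_hasDerivAt t (hγd t)
  -- second derivative atoms at s
  set c := Real.cos (θ s) with hc
  set σ := Real.sin (θ s) with hσ
  set k := deriv θ s with hk
  set A := fderiv ℝ (fderiv ℝ u) (γ s) (1, 0) (1, 0) with hA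
  set B := fderiv ℝ (fderiv ℝ u) (γ s) (1, 0) (0, 1) with hB
  set D := fderiv ℝ (fderiv ℝ u) (γ s) (0, 1) (0, 1) with hD
  have hsym : fderiv ℝ (fderiv ℝ u) (γ s) (0, 1) (1, 0) = B := by
    rw [hB]; exact ((hcd _ (hγU s)).isSymmSndFDerivAt (by rw [minSmoothness_of_isRCLikeNormedField]; exact WithTop.coe_le_coe.mpr le_top) (0,1) (1,0))
  have hexp1 : fderiv ℝ (fderiv ℝ u) (γ s) (c, σ) (1, 0) = c * A + σ * B := by
    rw [pair_decomp (fderiv ℝ (fderiv ℝ u) (γ s)) c σ]; simp [hsym, hA]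
  have hexp2 : fderiv ℝ (fderiv ℝ u) (γ s) (c, σ) (0, 1) = c * B + σ * D := by
    rw [pair_decomp (fderiv ℝ (fderiv ℝ u) (γ s)) c σ]; simp [hB, hD]
  have hat : HasDerivAt (fun t => pdx u (γ t)) (c * A + σ * B) s := by
    have h := (hDuγ s).clm_apply (hasDerivAt_const s ((1:ℝ), (0:ℝ)))
    simp at h; exact h.congr_deriv hexp1
  have hbt : HasDerivAt (fun t => pdy u (γ t)) (c * B + σ * D) s := by
    have h := (hDuγ s).clm_apply (hasDerivAt_const s ((0:ℝ), (1:ℝ)))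
    simp at h; exact h.congr_deriv hexp2
  have hcosθ : ∀ t, HasDerivAt (fun t => Real.cos (θ t)) (-Real.sin (θ t) * deriv θ t) t :=
    fun t => (hθd t).cos
  have hsinθ : ∀ t, HasDerivAt (fun t => Real.sin (θ t)) (Real.cos (θ t) * deriv θ t) t :=
    fun t => (hθd t).sin
  -- second derivative of u along the curve
  have hD1 : deriv (fun t => u (γ t))
      = fun t => Real.cos (θ t) * pdx u (γ t) + Real.sin (θ t) * pdy u (γ t) :=
    funext fun t => (hTt t).deriv
  have hT2 : HasDerivAt (deriv (fun t => u (γ t)))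
      ((-σ * k * pdx u (γ s) + c * (c * A + σ * B))
        + (c * k * pdy u (γ s) + σ * (c * B + σ * D))) s := by
    rw [hD1]
    exact ((hcosθ s).mul hat).add ((hsinθ s).mul hbt)
  -- derivative of the normal derivative along the curve
  have hN : HasDerivAt (fun t => nderiv (θ t) u (γ t))
      ((c * k * pdx u (γ s) + σ * (c * A + σ * B))
        - (-σ * k * pdy u (γ s) + c * (c * B + σ * D))) s :=
    ((hsinθ s).mul hat).sub ((hcosθ s).mul hbt)
  -- PDE at the boundary point
  have hDfx : HasFDerivAt (pdx u) ((fderiv ℝ (fderiv ℝ u) (γ s)).flip (1, 0)) (γ s) := by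
    have h := (hu2 s).clm_apply (hasFDerivAt_const ((1:ℝ), (0:ℝ)) (γ s))
    simp at h; exact h
  have hDfy : HasFDerivAt (pdy u) ((fderiv ℝ (fderiv ℝ u) (γ s)).flip (0, 1)) (γ s) := by
    have h := (hu2 s).clm_apply (hasFDerivAt_const ((0:ℝ), (1:ℝ)) (γ s))
    simp at h; exact h
  have hpde : A + D = -(u (γ s)) := by
    have h0 := hupde _ (frontier_subset_closure (hrange ▸ Set.mem_range_self s))
    have h1 : pdx (pdx u) (γ s) = A := by
      show fderiv ℝ (pdx u) (γ s) (1,0) = A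
      rw [hDfx.fderiv]; rfl
    have h2 : pdy (pdy u) (γ s) = D := by
      show fderiv ℝ (pdy u) (γ s) (0,1) = D
      rw [hDfy.fderiv]; rfl
    simp only [lap, h1, h2] at h0
    linarith
  -- fderiv of gradbarC
  have hgbF : HasFDerivAt (gradbarC u)
      (Complex.ofRealCLM.comp ((fderiv ℝ (fderiv ℝ u) (γ s)).flip (1, 0))
        - Complex.I • (Complex.ofRealCLM.comp ((fderiv ℝ (fderiv ℝ u) (γ s)).flip (0, 1))))
      (γ s) := by
    have hx := Complex.ofRealCLM.hasFDerivAt.comp (γ s) hDfx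
    have hy := (Complex.ofRealCLM.hasFDerivAt.comp (γ s) hDfy).const_mul Complex.I
    exact hx.sub hy
  have hgb : ∀ v : ℝ × ℝ, fderiv ℝ (gradbarC u) (γ s) v
      = ((fderiv ℝ (fderiv ℝ u) (γ s) v (1, 0) : ℝ) : ℂ)
        - Complex.I * ((fderiv ℝ (fderiv ℝ u) (γ s) v (0, 1) : ℝ) : ℂ) := by
    intro v
    rw [hgbF.fderiv]
    simp
  have hexpθ : Complex.exp (-Complex.I * (θ s : ℂ)) = (c : ℂ) - Complex.I * (σ : ℂ) := by
    rw [show -Complex.I * ((θ s):ℂ) = ((-(θ s) : ℝ):ℂ) * Complex.I by push_cast; ring,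
      Complex.exp_mul_I]
    simp [← Complex.ofReal_cos, ← Complex.ofReal_sin, hc, hσ]
    ring
  have h1C : (c : ℂ) ^ 2 + (σ : ℂ) ^ 2 = 1 := by
    rw [hc, hσ]; exact_mod_cast Real.cos_sq_add_sin_sq (θ s)
  have h2C : (A : ℂ) + (D : ℂ) = -((u (γ s) : ℝ) : ℂ) := by exact_mod_cast hpde
  have hTtC : ∀ t, HasDerivAt (fun t => ((u (γ t) : ℝ) : ℂ))
      ((Real.cos (θ t) * pdx u (γ t) + Real.sin (θ t) * pdy u (γ t) : ℝ) : ℂ) t := fun t =>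
    (hTt t).ofReal_comp
  have hD1C : deriv (fun t => ((u (γ t) : ℝ) : ℂ))
      = fun t => ((Real.cos (θ t) * pdx u (γ t) + Real.sin (θ t) * pdy u (γ t) : ℝ) : ℂ) :=
    funext fun t => (hTtC t).deriv
  have hT2C : HasDerivAt (deriv (fun t => ((u (γ t) : ℝ) : ℂ)))
      (((-σ * k * pdx u (γ s) + c * (c * A + σ * B)
        + (c * k * pdy u (γ s) + σ * (c * B + σ * D)) : ℝ) : ℂ)) s := by
    rw [hD1C]
    exact (((hcosθ s).mul hat).add ((hsinθ s).mul hbt)).ofReal_comp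
  have hNC : HasDerivAt (fun t => ((nderiv (θ t) u (γ t) : ℝ) : ℂ))
      (((c * k * pdx u (γ s) + σ * (c * A + σ * B)
        - (-σ * k * pdy u (γ s) + c * (c * B + σ * D)) : ℝ) : ℂ)) s := hN.ofReal_comp
  constructor
  · rw [(hTtC s).deriv, hexpθ]
    simp only [gradbarC, nderiv]
    rw [← hc, ← hσ]
    push_cast
    linear_combination (Complex.I * ((pdy u (γ s) : ℝ) : ℂ) - ((pdx u (γ s) : ℝ) : ℂ)) * h1C
      + (((pdx u (γ s) : ℝ) : ℂ) * (σ:ℂ)^2 - ((pdy u (γ s) : ℝ) : ℂ) * (c:ℂ) * (σ:ℂ)) * Complex.I_sq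
  · rw [(hTtC s).deriv, hT2C.deriv, hNC.deriv, hexpθ]
    simp only [nderivC, nderiv, pdxC, pdyC, hgb, hsym]
    rw [← hc, ← hσ, ← hA, ← hB, ← hD]
    push_cast
    linear_combination
      ((σ:ℂ) * D + (σ:ℂ) * B * Complex.I + (c:ℂ) * B + (c:ℂ) * A * Complex.I) * h1C
      + ((σ:ℂ) + (c:ℂ) * Complex.I) * h2C
      - ((σ:ℂ) * ((u (γ s) : ℝ) : ℂ) + (σ:ℂ)^3 * D + 2 * (c:ℂ) * (σ:ℂ)^2 * B
          + (c:ℂ)^2 * (σ:ℂ) * A) * Complex.I_sq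
end
end

section
/- Let u be a C^∞ function on the closure of Ω satisfying −Δu = u, let R = −y ∂/∂x + x ∂/∂y and S = x ∂/∂x + y ∂/∂y, and set ψ = (R + iS)u. Then (R + iS)u = (−y + ix)·∇̄u, and along ∂Ω the boundary data (ψ|∂Ω, ∂ψ/∂n|∂Ω) is obtained from (u|∂Ω, ∂u/∂n|∂Ω) by applying the matrix operator N = (−y(s) + i x(s))·M̄ + [[0,0],[d/ds, i]], where M̄ = e^{−iθ(s)} · [[d/ds, i],[κ d/ds − i(d²/ds² + 1), iκ + d/ds]] is the matrix operator corresponding to ∇̄ = ∂/∂x − i ∂/∂y. -/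
noncomputable section
open Real MeasureTheory ComplexConjugate

private lemma chain_deriv {γ : ℝ → ℝ × ℝ} {s : ℝ} {v : ℝ × ℝ} (hγ : HasDerivAt γ v s)
    {f : ℝ × ℝ → ℝ} (hf : DifferentiableAt ℝ f (γ s)) :
    HasDerivAt (fun t => f (γ t)) (v.1 * pdx f (γ s) + v.2 * pdy f (γ s)) s := by
  have h := hf.hasFDerivAt.comp_hasDerivAt s hγ
  refine h.congr_deriv (Eq.symm ?_)
  obtain ⟨a, b⟩ := v
  have hv : ((a, b) : ℝ × ℝ) = a • ((1:ℝ), (0:ℝ)) + b • ((0:ℝ), (1:ℝ)) := by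
    simp [Prod.ext_iff]
  conv_rhs => rw [hv]
  rw [map_add, _root_.map_smul, _root_.map_smul]
  simp [pdx, pdy, smul_eq_mul]

private lemma hasFDerivAt_pdv {u : ℝ × ℝ → ℝ} {p : ℝ × ℝ} (h : ContDiffAt ℝ (⊤ : ℕ∞) u p) (v : ℝ × ℝ) :
    HasFDerivAt (fun q => fderiv ℝ u q v)
      ((ContinuousLinearMap.apply ℝ ℝ v).comp (fderiv ℝ (fderiv ℝ u) p)) p := by
  have h1 : DifferentiableAt ℝ (fderiv ℝ u) p :=
    (h.fderiv_right (m := 1) (WithTop.coe_le_coe.mpr le_top)).differentiableAt one_ne_zero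
  exact (ContinuousLinearMap.apply ℝ ℝ v).hasFDerivAt.comp p h1.hasFDerivAt

/-- For `ψ = (R + iS)u` one has `(R + iS)u = (-y + ix)·∇̄u`,
and the boundary data of `ψ` is obtained from that of `u` by the matrix operator
`N = (-y(s) + i x(s))·M̄ + [[0,0],[d/ds, i]]`. -/
theorem boundary_data_of_rotation_scaling
    (Om : Set (ℝ × ℝ)) (hopen : IsOpen Om) (hconn : IsConnected Om)
    (hbdd : Bornology.IsBounded Om)
    (L : ℝ) (hL : 0 < L)
    (γ : ℝ → ℝ × ℝ) (θ : ℝ → ℝ)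
    (hγsmooth : ContDiff ℝ (⊤ : ℕ∞) γ) (hθsmooth : ContDiff ℝ (⊤ : ℕ∞) θ)
    (hγper : ∀ s, γ (s + L) = γ s)
    (hθper : ∀ s, θ (s + L) = θ s + 2 * π)
    (hrange : Set.range γ = frontier Om)
    (hinj : Set.InjOn γ (Set.Ico 0 L))
    (hγderiv : ∀ s, deriv γ s = (Real.cos (θ s), Real.sin (θ s)))
    (u : ℝ × ℝ → ℝ)
    (husmooth : SmoothNearClosure Om u)
    (hupde : ∀ p ∈ closure Om, - lap u p = u p)
 :
    (∀ p : ℝ × ℝ, (Rop u p : ℂ) + Complex.I * (Sop u p : ℂ)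
        = (-(p.2 : ℂ) + Complex.I * (p.1 : ℂ)) * gradbarC u p)
    ∧ (∀ s : ℝ,
        ((Rop u (γ s) : ℂ) + Complex.I * (Sop u (γ s) : ℂ)
          = (-(((γ s).2 : ℝ) : ℂ) + Complex.I * (((γ s).1 : ℝ) : ℂ)) *
            (Complex.exp (-Complex.I * (θ s : ℂ)) *
              ((deriv (fun t => u (γ t)) s : ℂ)
                + Complex.I * (nderiv (θ s) u (γ s) : ℂ))))
        ∧ (nderivC (θ s) (fun p => (Rop u p : ℂ) + Complex.I * (Sop u p : ℂ)) (γ s)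
          = (-(((γ s).2 : ℝ) : ℂ) + Complex.I * (((γ s).1 : ℝ) : ℂ)) *
            (Complex.exp (-Complex.I * (θ s : ℂ)) *
              (((-deriv θ s : ℝ) : ℂ) * (deriv (fun t => u (γ t)) s : ℂ)
                - Complex.I * ((deriv (deriv (fun t => u (γ t))) s : ℂ) + (u (γ s) : ℂ))
                + (Complex.I * ((-deriv θ s : ℝ) : ℂ) * (nderiv (θ s) u (γ s) : ℂ)
                    + (deriv (fun t => nderiv (θ t) u (γ t)) s : ℂ))))
            + ((deriv (fun t => u (γ t)) s : ℂ)
                + Complex.I * (nderiv (θ s) u (γ s) : ℂ))))  := by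
  obtain ⟨U, hUo, hUc, hucd⟩ := husmooth
  have hfr : ∀ t, γ t ∈ frontier Om := fun t => hrange ▸ Set.mem_range_self t
  have hmem : ∀ t, γ t ∈ U := fun t => hUc (frontier_subset_closure (hfr t))
  have hca : ∀ t, ContDiffAt ℝ (⊤ : ℕ∞) u (γ t) := fun t =>
    hucd.contDiffAt (hUo.mem_nhds (hmem t))
  have hdiff : ∀ t, DifferentiableAt ℝ u (γ t) := fun t => (hca t).differentiableAt (by simp)
  have part1 : ∀ p : ℝ × ℝ, (Rop u p : ℂ) + Complex.I * (Sop u p : ℂ)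
      = (-(p.2 : ℂ) + Complex.I * (p.1 : ℂ)) * gradbarC u p := by
    intro p
    simp only [Rop, Sop, gradbarC]
    push_cast
    linear_combination ((p.1 : ℂ) * (pdy u p : ℂ)) * Complex.I_sq
  refine ⟨part1, fun s => ?_⟩
  have hγd : ∀ t, HasDerivAt γ (Real.cos (θ t), Real.sin (θ t)) t := by
    intro t
    have := (hγsmooth.differentiable (by simp) t).hasDerivAt
    rwa [hγderiv t] at this
  have hθd : HasDerivAt θ (deriv θ s) s := (hθsmooth.differentiable (by simp) s).hasDerivAt
  have Hx : ∀ t, HasFDerivAt (pdx u)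
      ((ContinuousLinearMap.apply ℝ ℝ ((1:ℝ),(0:ℝ))).comp (fderiv ℝ (fderiv ℝ u) (γ t))) (γ t) :=
    fun t => hasFDerivAt_pdv (hca t) (1, 0)
  have Hy : ∀ t, HasFDerivAt (pdy u)
      ((ContinuousLinearMap.apply ℝ ℝ ((0:ℝ),(1:ℝ))).comp (fderiv ℝ (fderiv ℝ u) (γ t))) (γ t) :=
    fun t => hasFDerivAt_pdv (hca t) (0, 1)
  have hA : pdx (pdx u) (γ s) = fderiv ℝ (fderiv ℝ u) (γ s) (1, 0) (1, 0) := by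
    show fderiv ℝ (pdx u) (γ s) (1, 0) = _
    rw [(Hx s).fderiv]; rfl
  have hB : pdy (pdx u) (γ s) = fderiv ℝ (fderiv ℝ u) (γ s) (0, 1) (1, 0) := by
    show fderiv ℝ (pdx u) (γ s) (0, 1) = _
    rw [(Hx s).fderiv]; rfl
  have hB2 : pdx (pdy u) (γ s) = fderiv ℝ (fderiv ℝ u) (γ s) (1, 0) (0, 1) := by
    show fderiv ℝ (pdy u) (γ s) (1, 0) = _
    rw [(Hy s).fderiv]; rfl
  have hD : pdy (pdy u) (γ s) = fderiv ℝ (fderiv ℝ u) (γ s) (0, 1) (0, 1) := by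
    show fderiv ℝ (pdy u) (γ s) (0, 1) = _
    rw [(Hy s).fderiv]; rfl
  have hsym : fderiv ℝ (fderiv ℝ u) (γ s) (1, 0) (0, 1)
      = fderiv ℝ (fderiv ℝ u) (γ s) (0, 1) (1, 0) :=
    (hca s).isSymmSndFDerivAt (by simp; exact WithTop.coe_le_coe.mpr le_top) (1, 0) (0, 1)
  have hus : HasDerivAt (fun t => u (γ t))
      (Real.cos (θ s) * pdx u (γ s) + Real.sin (θ s) * pdy u (γ s)) s := by
    simpa using chain_deriv (hγd s) (hdiff s)
  have Hpx : HasDerivAt (fun t => pdx u (γ t))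
      (Real.cos (θ s) * pdx (pdx u) (γ s) + Real.sin (θ s) * pdy (pdx u) (γ s)) s := by
    simpa using chain_deriv (hγd s) (Hx s).differentiableAt
  have Hpy : HasDerivAt (fun t => pdy u (γ t))
      (Real.cos (θ s) * pdx (pdy u) (γ s) + Real.sin (θ s) * pdy (pdy u) (γ s)) s := by
    simpa using chain_deriv (hγd s) (Hy s).differentiableAt
  have hderiv_eq : deriv (fun t => u (γ t))
      = fun t => Real.cos (θ t) * pdx u (γ t) + Real.sin (θ t) * pdy u (γ t) := by
    funext t
    simpa using (chain_deriv (hγd t) (hdiff t)).deriv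
  have E1 : deriv (fun t => u (γ t)) s
      = Real.cos (θ s) * pdx u (γ s) + Real.sin (θ s) * pdy u (γ s) := hus.deriv
  have E2 : deriv (deriv (fun t => u (γ t))) s
      = (-Real.sin (θ s) * deriv θ s) * (pdx u (γ s))
        + Real.cos (θ s) * (Real.cos (θ s) * pdx (pdx u) (γ s) + Real.sin (θ s) * pdy (pdx u) (γ s))
        + ((Real.cos (θ s) * deriv θ s) * (pdy u (γ s))
        + Real.sin (θ s) * (Real.cos (θ s) * pdx (pdy u) (γ s) + Real.sin (θ s) * pdy (pdy u) (γ s))) := by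
    rw [hderiv_eq]
    exact (((hθd.cos).mul Hpx).add ((hθd.sin).mul Hpy)).deriv
  have E3 : deriv (fun t => nderiv (θ t) u (γ t)) s
      = (Real.cos (θ s) * deriv θ s) * (pdx u (γ s))
        + Real.sin (θ s) * (Real.cos (θ s) * pdx (pdx u) (γ s) + Real.sin (θ s) * pdy (pdx u) (γ s))
        - ((-Real.sin (θ s) * deriv θ s) * (pdy u (γ s))
        + Real.cos (θ s) * (Real.cos (θ s) * pdx (pdy u) (γ s) + Real.sin (θ s) * pdy (pdy u) (γ s))) := by
    have hfun : (fun t => nderiv (θ t) u (γ t))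
        = fun t => Real.sin (θ t) * pdx u (γ t) - Real.cos (θ t) * pdy u (γ t) := rfl
    rw [hfun]
    exact (((hθd.sin).mul Hpx).sub ((hθd.cos).mul Hpy)).deriv
  have E1C : deriv (fun t => ((u (γ t) : ℝ) : ℂ)) s
      = ((Real.cos (θ s) * pdx u (γ s) + Real.sin (θ s) * pdy u (γ s) : ℝ) : ℂ) :=
    hus.ofReal_comp.deriv
  have hderiv_eqC : deriv (fun t => ((u (γ t) : ℝ) : ℂ))
      = fun t => ((Real.cos (θ t) * pdx u (γ t) + Real.sin (θ t) * pdy u (γ t) : ℝ) : ℂ) := by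
    funext t
    have := chain_deriv (hγd t) (hdiff t)
    simp only [] at this
    simpa using this.ofReal_comp.deriv
  have E2C : deriv (deriv (fun t => ((u (γ t) : ℝ) : ℂ))) s
      = (((-Real.sin (θ s) * deriv θ s) * (pdx u (γ s))
        + Real.cos (θ s) * (Real.cos (θ s) * pdx (pdx u) (γ s) + Real.sin (θ s) * pdy (pdx u) (γ s))
        + ((Real.cos (θ s) * deriv θ s) * (pdy u (γ s))
        + Real.sin (θ s) * (Real.cos (θ s) * pdx (pdy u) (γ s) + Real.sin (θ s) * pdy (pdy u) (γ s))) : ℝ) : ℂ) := by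
    rw [hderiv_eqC]
    exact (((hθd.cos).mul Hpx).add ((hθd.sin).mul Hpy)).ofReal_comp.deriv
  have E3C : deriv (fun t => ((nderiv (θ t) u (γ t) : ℝ) : ℂ)) s
      = (((Real.cos (θ s) * deriv θ s) * (pdx u (γ s))
        + Real.sin (θ s) * (Real.cos (θ s) * pdx (pdx u) (γ s) + Real.sin (θ s) * pdy (pdx u) (γ s))
        - ((-Real.sin (θ s) * deriv θ s) * (pdy u (γ s))
        + Real.cos (θ s) * (Real.cos (θ s) * pdx (pdy u) (γ s) + Real.sin (θ s) * pdy (pdy u) (γ s))) : ℝ) : ℂ) := by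
    have hfunC : (fun t => ((nderiv (θ t) u (γ t) : ℝ) : ℂ))
        = fun t => ((Real.sin (θ t) * pdx u (γ t) - Real.cos (θ t) * pdy u (γ t) : ℝ) : ℂ) := rfl
    rw [hfunC]
    exact (((hθd.sin).mul Hpx).sub ((hθd.cos).mul Hpy)).ofReal_comp.deriv
  have hexp : Complex.exp (-Complex.I * (θ s : ℂ))
      = (Real.cos (θ s) : ℂ) - (Real.sin (θ s) : ℂ) * Complex.I := by
    rw [show -Complex.I * (θ s : ℂ) = ((-θ s : ℝ) : ℂ) * Complex.I by push_cast; ring,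
      Complex.exp_mul_I, ← Complex.ofReal_cos, ← Complex.ofReal_sin]
    simp [Real.cos_neg, Real.sin_neg]
    ring
  have hpy2 : (Real.cos (θ s) : ℂ) ^ 2 + (Real.sin (θ s) : ℂ) ^ 2 = 1 := by
    exact_mod_cast Real.cos_sq_add_sin_sq (θ s)
  have hPDE : -(pdx (pdx u) (γ s) + pdy (pdy u) (γ s)) = u (γ s) :=
    hupde (γ s) (frontier_subset_closure (hfr s))
  rw [hA, hD] at hPDE
  have hPDEC : -((fderiv ℝ (fderiv ℝ u) (γ s) (1, 0) (1, 0) : ℂ)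
      + (fderiv ℝ (fderiv ℝ u) (γ s) (0, 1) (0, 1) : ℂ)) = (u (γ s) : ℂ) := by
    exact_mod_cast hPDE
  constructor
  · rw [part1, hexp, E1C]
    simp only [nderiv, gradbarC]
    push_cast
    simp only [← Complex.ofReal_cos, ← Complex.ofReal_sin]
    linear_combination (-((-(((γ s).2 : ℝ) : ℂ) + Complex.I * (((γ s).1 : ℝ) : ℂ)) *
        ((pdx u (γ s) : ℂ) - Complex.I * (pdy u (γ s) : ℂ)))) * hpy2
      + ((Real.sin (θ s) : ℂ) * (-(((γ s).2 : ℝ) : ℂ) + Complex.I * (((γ s).1 : ℝ) : ℂ)) *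
        ((Real.sin (θ s) : ℂ) * (pdx u (γ s) : ℂ)
          - (Real.cos (θ s) : ℂ) * (pdy u (γ s) : ℂ))) * Complex.I_sq
  · -- normal derivative of psi
    have hψfun : (fun p : ℝ × ℝ => ((Rop u p : ℂ) + Complex.I * (Sop u p : ℂ)))
        = fun p : ℝ × ℝ => (-(p.2 : ℂ) + Complex.I * (p.1 : ℂ)) * gradbarC u p :=
      funext part1
    have HxC : HasFDerivAt (fun q => ((pdx u q : ℝ) : ℂ))
        (Complex.ofRealCLM.comp ((ContinuousLinearMap.apply ℝ ℝ ((1:ℝ),(0:ℝ))).comp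
          (fderiv ℝ (fderiv ℝ u) (γ s)))) (γ s) :=
      Complex.ofRealCLM.hasFDerivAt.comp (γ s) (Hx s)
    have HyC : HasFDerivAt (fun q => ((pdy u q : ℝ) : ℂ))
        (Complex.ofRealCLM.comp ((ContinuousLinearMap.apply ℝ ℝ ((0:ℝ),(1:ℝ))).comp
          (fderiv ℝ (fderiv ℝ u) (γ s)))) (γ s) :=
      Complex.ofRealCLM.hasFDerivAt.comp (γ s) (Hy s)
    have Hgrad : HasFDerivAt (gradbarC u)
        ((Complex.ofRealCLM.comp ((ContinuousLinearMap.apply ℝ ℝ ((1:ℝ),(0:ℝ))).comp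
            (fderiv ℝ (fderiv ℝ u) (γ s))))
          - Complex.I • (Complex.ofRealCLM.comp ((ContinuousLinearMap.apply ℝ ℝ ((0:ℝ),(1:ℝ))).comp
            (fderiv ℝ (fderiv ℝ u) (γ s))))) (γ s) :=
      HxC.sub (HyC.const_mul Complex.I)
    have HgC : HasFDerivAt (fun q : ℝ × ℝ => (-(q.2 : ℂ) + Complex.I * (q.1 : ℂ)))
        (-(Complex.ofRealCLM.comp (ContinuousLinearMap.snd ℝ ℝ ℝ))
          + Complex.I • (Complex.ofRealCLM.comp (ContinuousLinearMap.fst ℝ ℝ ℝ))) (γ s) :=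
      ((Complex.ofRealCLM.hasFDerivAt.comp (γ s) hasFDerivAt_snd).neg).add
        ((Complex.ofRealCLM.hasFDerivAt.comp (γ s) hasFDerivAt_fst).const_mul Complex.I)
    have Hpsi : HasFDerivAt (fun q : ℝ × ℝ => (-(q.2 : ℂ) + Complex.I * (q.1 : ℂ)) * gradbarC u q)
        ((-( ((γ s).2 : ℝ) : ℂ) + Complex.I * (((γ s).1 : ℝ) : ℂ)) •
          ((Complex.ofRealCLM.comp ((ContinuousLinearMap.apply ℝ ℝ ((1:ℝ),(0:ℝ))).comp
              (fderiv ℝ (fderiv ℝ u) (γ s))))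
            - Complex.I • (Complex.ofRealCLM.comp ((ContinuousLinearMap.apply ℝ ℝ ((0:ℝ),(1:ℝ))).comp
              (fderiv ℝ (fderiv ℝ u) (γ s)))))
          + gradbarC u (γ s) •
            (-(Complex.ofRealCLM.comp (ContinuousLinearMap.snd ℝ ℝ ℝ))
              + Complex.I • (Complex.ofRealCLM.comp (ContinuousLinearMap.fst ℝ ℝ ℝ)))) (γ s) :=
      HgC.mul Hgrad
    have epx : pdxC (fun q : ℝ × ℝ => (-(q.2 : ℂ) + Complex.I * (q.1 : ℂ)) * gradbarC u q) (γ s)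
        = (-( ((γ s).2 : ℝ) : ℂ) + Complex.I * (((γ s).1 : ℝ) : ℂ)) *
            ((fderiv ℝ (fderiv ℝ u) (γ s) (1,0) (1,0) : ℂ)
              - Complex.I * (fderiv ℝ (fderiv ℝ u) (γ s) (1,0) (0,1) : ℂ))
          + Complex.I * gradbarC u (γ s) := by
      rw [pdxC, Hpsi.fderiv]
      simp [smul_eq_mul]
      ring
    have epy : pdyC (fun q : ℝ × ℝ => (-(q.2 : ℂ) + Complex.I * (q.1 : ℂ)) * gradbarC u q) (γ s)
        = (-( ((γ s).2 : ℝ) : ℂ) + Complex.I * (((γ s).1 : ℝ) : ℂ)) *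
            ((fderiv ℝ (fderiv ℝ u) (γ s) (0,1) (1,0) : ℂ)
              - Complex.I * (fderiv ℝ (fderiv ℝ u) (γ s) (0,1) (0,1) : ℂ))
          - gradbarC u (γ s) := by
      rw [pdyC, Hpsi.fderiv]
      simp [smul_eq_mul]
      ring
    rw [hψfun]
    rw [nderivC, epx, epy, E1C, E2C, E3C, hexp]
    simp only [nderiv, gradbarC]
    rw [hA, hB, hB2, hD, hsym]
    push_cast
    simp only [← Complex.ofReal_cos, ← Complex.ofReal_sin]
    linear_combination
      ((-(((γ s).2 : ℝ) : ℂ) + Complex.I * (((γ s).1 : ℝ) : ℂ)) *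
        (((Real.cos (θ s) : ℂ) * (fderiv ℝ (fderiv ℝ u) (γ s) (0,1) (1,0) : ℂ)
            + (Real.sin (θ s) : ℂ) * (fderiv ℝ (fderiv ℝ u) (γ s) (0,1) (0,1) : ℂ))
          + Complex.I * ((Real.cos (θ s) : ℂ) * (fderiv ℝ (fderiv ℝ u) (γ s) (1,0) (1,0) : ℂ)
            + (Real.sin (θ s) : ℂ) * (fderiv ℝ (fderiv ℝ u) (γ s) (0,1) (1,0) : ℂ)))) * hpy2
      + (-((-(((γ s).2 : ℝ) : ℂ) + Complex.I * (((γ s).1 : ℝ) : ℂ)) *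
          ((Real.sin (θ s) : ℂ) + Complex.I * (Real.cos (θ s) : ℂ)))) * hPDEC
      + (-(Real.sin (θ s) : ℂ) * (-(((γ s).2 : ℝ) : ℂ) + Complex.I * (((γ s).1 : ℝ) : ℂ)) *
          ((u (γ s) : ℂ) + (Real.cos (θ s) : ℂ)^2 * (fderiv ℝ (fderiv ℝ u) (γ s) (1,0) (1,0) : ℂ)
            + 2 * (Real.cos (θ s) : ℂ) * (Real.sin (θ s) : ℂ) * (fderiv ℝ (fderiv ℝ u) (γ s) (0,1) (1,0) : ℂ)
            + (Real.sin (θ s) : ℂ)^2 * (fderiv ℝ (fderiv ℝ u) (γ s) (0,1) (0,1) : ℂ))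
        - (Real.sin (θ s) : ℂ) * (pdy u (γ s) : ℂ)) * Complex.I_sq
end
end

section
/- Let ω be a C^∞ solution of −Δω = ω in Ω with ∂ω/∂n = 0 and ω = 1 on ∂Ω. Then along ∂Ω: ω_xx = −½(1 − cos 2θ(s)) and ∂(ω_xx)/∂n = κ(s) cos 2θ(s); ω_xy = ½ sin 2θ(s) and ∂(ω_xy)/∂n = κ(s) sin 2θ(s); ω_yy = −½(1 + cos 2θ(s)) and ∂(ω_yy)/∂n = −κ(s) cos 2θ(s). -/
noncomputable section
open Real MeasureTheory ComplexConjugate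

section Helpers


lemma fderiv_apply_pair (f : ℝ × ℝ → ℝ) (p : ℝ × ℝ) (a b : ℝ) :
    fderiv ℝ f p (a, b) = a * pdx f p + b * pdy f p := by
  have h : (a, b) = a • ((1:ℝ), (0:ℝ)) + b • ((0:ℝ), (1:ℝ)) := by simp
  rw [h, map_add, _root_.map_smul, _root_.map_smul]
  simp [pdx, pdy, smul_eq_mul]

lemma pdx_contDiffOn {f : ℝ × ℝ → ℝ} {U : Set (ℝ × ℝ)} (hf : ContDiffOn ℝ (⊤ : ℕ∞) f U)
    (hU : IsOpen U) : ContDiffOn ℝ (⊤ : ℕ∞) (pdx f) U := by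
  have h : ContDiffOn ℝ (⊤ : ℕ∞) (fderiv ℝ f) U := hf.fderiv_of_isOpen hU (by simp)
  exact h.clm_apply contDiffOn_const

lemma pdy_contDiffOn {f : ℝ × ℝ → ℝ} {U : Set (ℝ × ℝ)} (hf : ContDiffOn ℝ (⊤ : ℕ∞) f U)
    (hU : IsOpen U) : ContDiffOn ℝ (⊤ : ℕ∞) (pdy f) U := by
  have h : ContDiffOn ℝ (⊤ : ℕ∞) (fderiv ℝ f) U := hf.fderiv_of_isOpen hU (by simp)
  exact h.clm_apply contDiffOn_const

lemma clairaut {f : ℝ × ℝ → ℝ} {U : Set (ℝ × ℝ)} (hU : IsOpen U) (hf : ContDiffOn ℝ (⊤ : ℕ∞) f U)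
    {p : ℝ × ℝ} (hp : p ∈ U) : pdx (pdy f) p = pdy (pdx f) p := by
  have hfa : ContDiffAt ℝ (⊤ : ℕ∞) f p := hf.contDiffAt (hU.mem_nhds hp)
  have hsym := hfa.isSymmSndFDerivAt (by rw [minSmoothness_of_isRCLikeNormedField]; exact WithTop.coe_le_coe.mpr le_top)
  have hdiff : DifferentiableAt ℝ (fderiv ℝ f) p :=
    (hfa.fderiv_right (m := 1) ((by exact WithTop.coe_le_coe.mpr le_top))).differentiableAt one_ne_zero
  have key : ∀ v w : ℝ × ℝ, fderiv ℝ (fun q => fderiv ℝ f q v) p w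
      = fderiv ℝ (fderiv ℝ f) p w v := by
    intro v w
    rw [fderiv_clm_apply hdiff (differentiableAt_const v)]
    simp
  have h1 : pdx (pdy f) p = fderiv ℝ (fderiv ℝ f) p (1,0) (0,1) := key (0,1) (1,0)
  have h2 : pdy (pdx f) p = fderiv ℝ (fderiv ℝ f) p (0,1) (1,0) := key (1,0) (0,1)
  rw [h1, h2, hsym]

lemma deriv_along {f : ℝ × ℝ → ℝ} {U : Set (ℝ × ℝ)} (hU : IsOpen U) (hf : ContDiffOn ℝ (⊤ : ℕ∞) f U)
    {γ : ℝ → ℝ × ℝ} {θ : ℝ → ℝ} (hγ : ContDiff ℝ (⊤ : ℕ∞) γ)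
    (hγderiv : ∀ s, deriv γ s = (Real.cos (θ s), Real.sin (θ s)))
    {s : ℝ} (hp : γ s ∈ U) :
    HasDerivAt (fun t => f (γ t))
      (Real.cos (θ s) * pdx f (γ s) + Real.sin (θ s) * pdy f (γ s)) s := by
  have hγd : HasDerivAt γ (Real.cos (θ s), Real.sin (θ s)) s := by
    have h := ((hγ.differentiable (by simp)) s).hasDerivAt
    rwa [hγderiv s] at h
  have hfd : DifferentiableAt ℝ f (γ s) :=
    (hf.contDiffAt (hU.mem_nhds hp)).differentiableAt (by simp)
  have h := hfd.hasFDerivAt.comp_hasDerivAt s hγd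
  rwa [fderiv_apply_pair] at h

lemma tangential_eq {f : ℝ × ℝ → ℝ} {U : Set (ℝ × ℝ)} (hU : IsOpen U)
    (hf : ContDiffOn ℝ (⊤ : ℕ∞) f U)
    {γ : ℝ → ℝ × ℝ} {θ : ℝ → ℝ} (hγ : ContDiff ℝ (⊤ : ℕ∞) γ)
    (hγderiv : ∀ s, deriv γ s = (Real.cos (θ s), Real.sin (θ s)))
    (hγU : ∀ t, γ t ∈ U)
    {φ : ℝ → ℝ} (hval : ∀ t, f (γ t) = φ t) {s : ℝ} {d : ℝ} (hφ : HasDerivAt φ d s) :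
    Real.cos (θ s) * pdx f (γ s) + Real.sin (θ s) * pdy f (γ s) = d := by
  have h1 := deriv_along hU hf hγ hγderiv (hγU s)
  have h2 : HasDerivAt (fun t => f (γ t)) d s :=
    hφ.congr_of_eventuallyEq (Filter.Eventually.of_forall fun t => hval t)
  exact h1.unique h2

lemma closure_ext {f g : ℝ × ℝ → ℝ} {U Om : Set (ℝ × ℝ)} (hU : IsOpen U)
    (hsub : closure Om ⊆ U) (hf : ContinuousOn f U) (hg : ContinuousOn g U)
    (heq : ∀ q ∈ Om, f q = g q) {p : ℝ × ℝ} (hp : p ∈ closure Om) : f p = g p := by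
  have hpU : p ∈ U := hsub hp
  have hfc : ContinuousAt f p := hf.continuousAt (hU.mem_nhds hpU)
  have hgc : ContinuousAt g p := hg.continuousAt (hU.mem_nhds hpU)
  have hne : (nhdsWithin p Om).NeBot := mem_closure_iff_nhdsWithin_neBot.mp hp
  have h1 : Filter.Tendsto f (nhdsWithin p Om) (nhds (f p)) :=
    hfc.tendsto.mono_left nhdsWithin_le_nhds
  have h2 : Filter.Tendsto f (nhdsWithin p Om) (nhds (g p)) := by
    refine Filter.Tendsto.congr' ?_ (hgc.tendsto.mono_left nhdsWithin_le_nhds)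
    filter_upwards [self_mem_nhdsWithin] with q hq using (heq q hq).symm
  exact tendsto_nhds_unique h1 h2

lemma pdx_add {f g : ℝ × ℝ → ℝ} {p : ℝ × ℝ} (hf : DifferentiableAt ℝ f p)
    (hg : DifferentiableAt ℝ g p) :
    pdx (fun q => f q + g q) p = pdx f p + pdx g p := by
  unfold pdx; rw [fderiv_fun_add hf hg]; simp

lemma pdx_neg (f : ℝ × ℝ → ℝ) (p : ℝ × ℝ) : pdx (fun q => -f q) p = -pdx f p := by
  unfold pdx; rw [fderiv_fun_neg]; simp

lemma pdy_add {f g : ℝ × ℝ → ℝ} {p : ℝ × ℝ} (hf : DifferentiableAt ℝ f p)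
    (hg : DifferentiableAt ℝ g p) :
    pdy (fun q => f q + g q) p = pdy f p + pdy g p := by
  unfold pdy; rw [fderiv_fun_add hf hg]; simp

lemma pdy_neg (f : ℝ × ℝ → ℝ) (p : ℝ × ℝ) : pdy (fun q => -f q) p = -pdy f p := by
  unfold pdy; rw [fderiv_fun_neg]; simp

end Helpers

/-- Boundary traces of the second derivatives of `ω`. -/
theorem boundary_trace_second_derivatives
    (Om : Set (ℝ × ℝ)) (hopen : IsOpen Om) (hconn : IsConnected Om)
    (hbdd : Bornology.IsBounded Om)
    (L : ℝ) (hL : 0 < L)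
    (γ : ℝ → ℝ × ℝ) (θ : ℝ → ℝ)
    (hγsmooth : ContDiff ℝ (⊤ : ℕ∞) γ) (hθsmooth : ContDiff ℝ (⊤ : ℕ∞) θ)
    (hγper : ∀ s, γ (s + L) = γ s)
    (hθper : ∀ s, θ (s + L) = θ s + 2 * π)
    (hrange : Set.range γ = frontier Om)
    (hinj : Set.InjOn γ (Set.Ico 0 L))
    (hγderiv : ∀ s, deriv γ s = (Real.cos (θ s), Real.sin (θ s)))
    (ω : ℝ × ℝ → ℝ)
    (hωsmooth : SmoothNearClosure Om ω)
    (hωpde : ∀ p ∈ Om, - lap ω p = ω p)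
    (hωNeumann : ∀ s, nderiv (θ s) ω (γ s) = 0)
    (hωbdry : ∀ p ∈ frontier Om, ω p = 1)
    (s : ℝ) :
    pdx (pdx ω) (γ s) = -(1 / 2) * (1 - Real.cos (2 * θ s))
    ∧ nderiv (θ s) (pdx (pdx ω)) (γ s) = (-deriv θ s) * Real.cos (2 * θ s)
    ∧ pdx (pdy ω) (γ s) = (1 / 2) * Real.sin (2 * θ s)
    ∧ nderiv (θ s) (pdx (pdy ω)) (γ s) = (-deriv θ s) * Real.sin (2 * θ s)
    ∧ pdy (pdy ω) (γ s) = -(1 / 2) * (1 + Real.cos (2 * θ s))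
    ∧ nderiv (θ s) (pdy (pdy ω)) (γ s) = -(-deriv θ s) * Real.cos (2 * θ s) := by
  obtain ⟨U, hU, hsubU, hsm⟩ := hωsmooth
  have hγfr : ∀ t, γ t ∈ frontier Om := fun t => hrange ▸ Set.mem_range_self t
  have hcl : ∀ t, γ t ∈ closure Om := fun t => frontier_subset_closure (hγfr t)
  have hγU : ∀ t, γ t ∈ U := fun t => hsubU (hcl t)
  have hOmU : Om ⊆ U := fun q hq => hsubU (subset_closure hq)
  have h1x : ContDiffOn ℝ (⊤ : ℕ∞) (pdx ω) U := pdx_contDiffOn hsm hU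
  have h1y : ContDiffOn ℝ (⊤ : ℕ∞) (pdy ω) U := pdy_contDiffOn hsm hU
  have h2xx := pdx_contDiffOn h1x hU
  have h2xy := pdx_contDiffOn h1y hU
  have h2yy := pdy_contDiffOn h1y hU
  have diffAt : ∀ f : ℝ × ℝ → ℝ, ContDiffOn ℝ (⊤ : ℕ∞) f U → ∀ q ∈ U, DifferentiableAt ℝ f q :=
    fun f hf q hq => (hf.contDiffAt (hU.mem_nhds hq)).differentiableAt (by simp)
  have hpy : ∀ x : ℝ, Real.sin x ^ 2 + Real.cos x ^ 2 = 1 := fun x => Real.sin_sq_add_cos_sq x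
  -- gradient vanishes on the boundary
  have hT0 : ∀ t, Real.cos (θ t) * pdx ω (γ t) + Real.sin (θ t) * pdy ω (γ t) = 0 := fun t =>
    tangential_eq hU hsm hγsmooth hγderiv hγU (φ := fun _ => (1:ℝ))
      (fun u => hωbdry _ (hγfr u)) (hasDerivAt_const t (1:ℝ))
  have hN0 : ∀ t, Real.sin (θ t) * pdx ω (γ t) - Real.cos (θ t) * pdy ω (γ t) = 0 :=
    fun t => hωNeumann t
  have hgx : ∀ t, pdx ω (γ t) = 0 := by
    intro t; have h1 := hT0 t; have h2 := hN0 t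
    linear_combination Real.cos (θ t) * h1 + Real.sin (θ t) * h2 - pdx ω (γ t) * hpy (θ t)
  have hgy : ∀ t, pdy ω (γ t) = 0 := by
    intro t; have h1 := hT0 t; have h2 := hN0 t
    linear_combination Real.sin (θ t) * h1 - Real.cos (θ t) * h2 - pdy ω (γ t) * hpy (θ t)
  -- Clairaut on U
  have hsym : ∀ q ∈ U, pdx (pdy ω) q = pdy (pdx ω) q := fun q hq => clairaut hU hsm hq
  -- tangential second-derivative identities
  have hE1 : ∀ t, Real.cos (θ t) * pdx (pdx ω) (γ t) + Real.sin (θ t) * pdy (pdx ω) (γ t) = 0 :=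
    fun t => tangential_eq hU h1x hγsmooth hγderiv hγU (φ := fun _ => (0:ℝ)) hgx
      (hasDerivAt_const t (0:ℝ))
  have hE2 : ∀ t, Real.cos (θ t) * pdx (pdy ω) (γ t) + Real.sin (θ t) * pdy (pdy ω) (γ t) = 0 :=
    fun t => tangential_eq hU h1y hγsmooth hγderiv hγU (φ := fun _ => (0:ℝ)) hgy
      (hasDerivAt_const t (0:ℝ))
  -- the PDE extends to the closure
  have hE3 : ∀ t, pdx (pdx ω) (γ t) + pdy (pdy ω) (γ t) = -1 := by
    intro t
    have h := closure_ext hU hsubU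
      (f := fun q => pdx (pdx ω) q + pdy (pdy ω) q) (g := fun q => -ω q)
      (h2xx.continuousOn.add h2yy.continuousOn) (hsm.continuousOn.neg)
      (fun q hq => by
        have h2 := hωpde q hq; unfold lap at h2
        show pdx (pdx ω) q + pdy (pdy ω) q = -ω q
        linarith) (hcl t)
    have h' : pdx (pdx ω) (γ t) + pdy (pdy ω) (γ t) = -ω (γ t) := h
    rw [h', hωbdry _ (hγfr t)]
  -- explicit boundary values of the second derivatives
  have haa : ∀ t, pdx (pdx ω) (γ t) = -(Real.sin (θ t) * Real.sin (θ t)) := by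
    intro t; have h1 := hE1 t; have h2 := hE2 t; have h3 := hE3 t
    rw [← hsym _ (hγU t)] at h1
    linear_combination Real.cos (θ t) * h1 - Real.sin (θ t) * h2
      + Real.sin (θ t) ^ 2 * h3 - pdx (pdx ω) (γ t) * hpy (θ t)
  have hab : ∀ t, pdx (pdy ω) (γ t) = Real.sin (θ t) * Real.cos (θ t) := by
    intro t; have h1 := hE1 t; have h2 := hE2 t; have h3 := hE3 t
    rw [← hsym _ (hγU t)] at h1
    linear_combination Real.sin (θ t) * h1 + Real.cos (θ t) * h2
      - Real.sin (θ t) * Real.cos (θ t) * h3 - pdx (pdy ω) (γ t) * hpy (θ t)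
  have hcc : ∀ t, pdy (pdy ω) (γ t) = -(Real.cos (θ t) * Real.cos (θ t)) := by
    intro t; have h3 := hE3 t; have ha := haa t
    linear_combination h3 - ha + hpy (θ t)
  -- derivatives of θ-compositions
  have hθd : ∀ t, HasDerivAt θ (deriv θ t) t := fun t =>
    ((hθsmooth.differentiable (by simp)) t).hasDerivAt
  have hsinθ : ∀ t, HasDerivAt (fun u => Real.sin (θ u)) (Real.cos (θ t) * deriv θ t) t :=
    fun t => (Real.hasDerivAt_sin (θ t)).comp t (hθd t)
  have hcosθ : ∀ t, HasDerivAt (fun u => Real.cos (θ u)) (-Real.sin (θ t) * deriv θ t) t :=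
    fun t => (Real.hasDerivAt_cos (θ t)).comp t (hθd t)
  -- tangential third-derivative identities
  have hF1 := tangential_eq hU h2xx hγsmooth hγderiv hγU
    (φ := fun u => -(Real.sin (θ u) * Real.sin (θ u))) haa (((hsinθ s).mul (hsinθ s)).neg)
  have hF2 := tangential_eq hU h2xy hγsmooth hγderiv hγU
    (φ := fun u => Real.sin (θ u) * Real.cos (θ u)) hab ((hsinθ s).mul (hcosθ s))
  -- the differentiated PDE extends to the closure
  have hF4Om : ∀ q ∈ Om, pdx (pdx (pdx ω)) q + pdx (pdy (pdy ω)) q = -pdx ω q := by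
    intro q hq
    have hEq : (fun r => pdx (pdx ω) r + pdy (pdy ω) r) =ᶠ[nhds q] (fun r => -ω r) := by
      filter_upwards [hopen.mem_nhds hq] with r hr
      have h2 := hωpde r hr; unfold lap at h2; linarith
    have hL : pdx (fun r => pdx (pdx ω) r + pdy (pdy ω) r) q
        = pdx (pdx (pdx ω)) q + pdx (pdy (pdy ω)) q :=
      pdx_add (diffAt _ h2xx q (hOmU hq)) (diffAt _ h2yy q (hOmU hq))
    have hR : pdx (fun r => -ω r) q = -pdx ω q := pdx_neg ω q
    have hM : pdx (fun r => pdx (pdx ω) r + pdy (pdy ω) r) q = pdx (fun r => -ω r) q := by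
      show (fderiv ℝ (fun r => pdx (pdx ω) r + pdy (pdy ω) r) q) (1, 0)
        = (fderiv ℝ (fun r => -ω r) q) (1, 0)
      rw [hEq.fderiv_eq]
    linarith [hL, hR, hM]
  have hF5Om : ∀ q ∈ Om, pdy (pdx (pdx ω)) q + pdy (pdy (pdy ω)) q = -pdy ω q := by
    intro q hq
    have hEq : (fun r => pdx (pdx ω) r + pdy (pdy ω) r) =ᶠ[nhds q] (fun r => -ω r) := by
      filter_upwards [hopen.mem_nhds hq] with r hr
      have h2 := hωpde r hr; unfold lap at h2; linarith
    have hL : pdy (fun r => pdx (pdx ω) r + pdy (pdy ω) r) q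
        = pdy (pdx (pdx ω)) q + pdy (pdy (pdy ω)) q :=
      pdy_add (diffAt _ h2xx q (hOmU hq)) (diffAt _ h2yy q (hOmU hq))
    have hR : pdy (fun r => -ω r) q = -pdy ω q := pdy_neg ω q
    have hM : pdy (fun r => pdx (pdx ω) r + pdy (pdy ω) r) q = pdy (fun r => -ω r) q := by
      show (fderiv ℝ (fun r => pdx (pdx ω) r + pdy (pdy ω) r) q) (0, 1)
        = (fderiv ℝ (fun r => -ω r) q) (0, 1)
      rw [hEq.fderiv_eq]
    linarith [hL, hR, hM]
  have hF4 : pdx (pdx (pdx ω)) (γ s) + pdx (pdy (pdy ω)) (γ s) = 0 := by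
    have h := closure_ext hU hsubU
      (f := fun q => pdx (pdx (pdx ω)) q + pdx (pdy (pdy ω)) q) (g := fun q => -pdx ω q)
      ((pdx_contDiffOn h2xx hU).continuousOn.add (pdx_contDiffOn h2yy hU).continuousOn)
      (h1x.continuousOn.neg) hF4Om (hcl s)
    have h' : pdx (pdx (pdx ω)) (γ s) + pdx (pdy (pdy ω)) (γ s) = -pdx ω (γ s) := h
    rw [h', hgx s, neg_zero]
  have hF5 : pdy (pdx (pdx ω)) (γ s) + pdy (pdy (pdy ω)) (γ s) = 0 := by
    have h := closure_ext hU hsubU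
      (f := fun q => pdy (pdx (pdx ω)) q + pdy (pdy (pdy ω)) q) (g := fun q => -pdy ω q)
      ((pdy_contDiffOn h2xx hU).continuousOn.add (pdy_contDiffOn h2yy hU).continuousOn)
      (h1y.continuousOn.neg) hF5Om (hcl s)
    have h' : pdy (pdx (pdx ω)) (γ s) + pdy (pdy (pdy ω)) (γ s) = -pdy ω (γ s) := h
    rw [h', hgy s, neg_zero]
  -- Clairaut identifications at γ s
  have hG1 : pdx (pdx (pdy ω)) (γ s) = pdy (pdx (pdx ω)) (γ s) := by
    have hfun : pdx (pdy ω) =ᶠ[nhds (γ s)] pdy (pdx ω) :=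
      Filter.eventuallyEq_of_mem (hU.mem_nhds (hγU s)) (fun q hq => hsym q hq)
    have h1 : pdx (pdx (pdy ω)) (γ s) = pdx (pdy (pdx ω)) (γ s) := by
      show fderiv ℝ (pdx (pdy ω)) (γ s) (1, 0) = fderiv ℝ (pdy (pdx ω)) (γ s) (1, 0)
      rw [hfun.fderiv_eq]
    rw [h1]
    exact clairaut hU h1x (hγU s)
  have hG2 : pdx (pdy (pdy ω)) (γ s) = pdy (pdx (pdy ω)) (γ s) := clairaut hU h1y (hγU s)
  -- final assembly
  refine ⟨?_, ?_, ?_, ?_, ?_, ?_⟩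
  · rw [Real.cos_two_mul]
    linear_combination haa s - hpy (θ s)
  · simp only [nderiv]; rw [Real.cos_two_mul]
    linear_combination -hF2 + Real.cos (θ s) * hG1 - Real.sin (θ s) * hG2
      + Real.sin (θ s) * hF4 + deriv θ s * hpy (θ s)
  · rw [Real.sin_two_mul]
    linear_combination hab s
  · simp only [nderiv]; rw [Real.sin_two_mul]
    linear_combination hF1 + Real.sin (θ s) * hG1 - Real.cos (θ s) * hF4
      + Real.cos (θ s) * hG2
  · rw [Real.cos_two_mul]
    linear_combination hcc s
  · simp only [nderiv]; rw [Real.cos_two_mul]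
    linear_combination hF2 + Real.sin (θ s) * hG2 - Real.cos (θ s) * hG1
      - Real.cos (θ s) * hF5 - deriv θ s * hpy (θ s)
end
end

section
/- Let ω be a C^∞ solution of −Δω = ω in Ω with ∂ω/∂n = 0 and ω = 1 on ∂Ω, and let Rω = −y ω_x + x ω_y. Then along ∂Ω: Rω = 0 and ∂(Rω)/∂n = ½ d(r²)/ds, where r²(s) = x(s)² + y(s)². -/
noncomputable section
open Real MeasureTheory ComplexConjugate

lemma aux_fderiv_pair (u : ℝ × ℝ → ℝ) (p : ℝ × ℝ) (c d : ℝ) :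
    fderiv ℝ u p (c, d) = c * pdx u p + d * pdy u p := by
  have h : (c, d) = c • ((1:ℝ),(0:ℝ)) + d • ((0:ℝ),(1:ℝ)) := by simp
  rw [h, map_add, (fderiv ℝ u p).map_smul, (fderiv ℝ u p).map_smul]
  simp [pdx, pdy, smul_eq_mul]

lemma aux_deriv_comp (γ : ℝ → ℝ × ℝ) (θ : ℝ → ℝ) (hγ : ContDiff ℝ (⊤ : ℕ∞) γ)
    (hγderiv : ∀ s, deriv γ s = (Real.cos (θ s), Real.sin (θ s)))
    (u : ℝ × ℝ → ℝ) (s : ℝ) (hu : DifferentiableAt ℝ u (γ s)) :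
    deriv (fun t => u (γ t)) s
      = Real.cos (θ s) * pdx u (γ s) + Real.sin (θ s) * pdy u (γ s) := by
  have hγd : HasDerivAt γ (deriv γ s) s :=
    ((hγ.differentiable (by simp)) s).hasDerivAt
  have h := (hu.hasFDerivAt.comp_hasDerivAt s hγd).deriv
  rw [show (fun t => u (γ t)) = u ∘ γ from rfl, h, hγderiv s, aux_fderiv_pair]


/-- Boundary trace of `Rω = -y ω_x + x ω_y`:
along `∂Ω`, `Rω = 0` and `∂(Rω)/∂n = ½ d(r²)/ds` with `r²(s) = x(s)² + y(s)²`. -/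
theorem boundary_trace_rotation
    (Om : Set (ℝ × ℝ)) (hopen : IsOpen Om) (hconn : IsConnected Om)
    (hbdd : Bornology.IsBounded Om)
    (L : ℝ) (hL : 0 < L)
    (γ : ℝ → ℝ × ℝ) (θ : ℝ → ℝ)
    (hγsmooth : ContDiff ℝ (⊤ : ℕ∞) γ) (hθsmooth : ContDiff ℝ (⊤ : ℕ∞) θ)
    (hγper : ∀ s, γ (s + L) = γ s)
    (hθper : ∀ s, θ (s + L) = θ s + 2 * π)
    (hrange : Set.range γ = frontier Om)
    (hinj : Set.InjOn γ (Set.Ico 0 L))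
    (hγderiv : ∀ s, deriv γ s = (Real.cos (θ s), Real.sin (θ s)))
    (ω : ℝ × ℝ → ℝ)
    (hωsmooth : SmoothNearClosure Om ω)
    (hωpde : ∀ p ∈ Om, - lap ω p = ω p)
    (hωNeumann : ∀ s, nderiv (θ s) ω (γ s) = 0)
    (hωbdry : ∀ p ∈ frontier Om, ω p = 1)
    (s : ℝ) :
    Rop ω (γ s) = 0
    ∧ nderiv (θ s) (Rop ω) (γ s)
        = (1 / 2) * deriv (fun t => (γ t).1 ^ 2 + (γ t).2 ^ 2) s := by
  obtain ⟨U, hUo, hUc, hωC⟩ := hωsmooth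
  have hfront : ∀ t, γ t ∈ frontier Om := fun t => by
    rw [← hrange]; exact Set.mem_range_self t
  have hmemU : ∀ t, γ t ∈ U := fun t => hUc (frontier_subset_closure (hfront t))
  have hAt : ∀ p ∈ U, ContDiffAt ℝ (⊤ : ℕ∞) ω p := fun p hp =>
    hωC.contDiffAt (hUo.mem_nhds hp)
  have hωdiff : ∀ t, DifferentiableAt ℝ ω (γ t) := fun t =>
    (hAt _ (hmemU t)).differentiableAt (by simp)
  have hfd1 : ∀ p ∈ U, ContDiffAt ℝ 1 (fderiv ℝ ω) p := fun p hp =>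
    (hAt p hp).fderiv_right (WithTop.coe_le_coe.mpr le_top)
  have hdxdiff : ∀ p ∈ U, DifferentiableAt ℝ (pdx ω) p := fun p hp =>
    ((hfd1 p hp).differentiableAt one_ne_zero).clm_apply (differentiableAt_const _)
  have hdydiff : ∀ p ∈ U, DifferentiableAt ℝ (pdy ω) p := fun p hp =>
    ((hfd1 p hp).differentiableAt one_ne_zero).clm_apply (differentiableAt_const _)
  have hsx : ∀ p ∈ U, ∀ v, fderiv ℝ (pdx ω) p v = fderiv ℝ (fderiv ℝ ω) p v (1, 0) := by
    intro p hp v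
    have := fderiv_clm_apply ((hfd1 p hp).differentiableAt one_ne_zero)
        (differentiableAt_const ((1:ℝ),(0:ℝ)))
    rw [show pdx ω = fun q => fderiv ℝ ω q (1,0) from rfl, this]; simp
  have hsy : ∀ p ∈ U, ∀ v, fderiv ℝ (pdy ω) p v = fderiv ℝ (fderiv ℝ ω) p v (0, 1) := by
    intro p hp v
    have := fderiv_clm_apply ((hfd1 p hp).differentiableAt one_ne_zero)
        (differentiableAt_const ((0:ℝ),(1:ℝ)))
    rw [show pdy ω = fun q => fderiv ℝ ω q (0,1) from rfl, this]; simp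
  have hsymm : ∀ p ∈ U, pdx (pdy ω) p = pdy (pdx ω) p := by
    intro p hp
    have h1 := hsx p hp (0,1)
    have h2 := hsy p hp (1,0)
    have h3 := ((hAt p hp).isSymmSndFDerivAt (by simp [minSmoothness_of_isRCLikeNormedField]; exact WithTop.coe_le_coe.mpr (le_top : (2:ℕ∞) ≤ ⊤))) ((1:ℝ),(0:ℝ)) ((0:ℝ),(1:ℝ))
    rw [pdx, pdy, h1, h2, h3]
  -- gradient vanishes on the boundary
  have hgrad0 : ∀ t, pdx ω (γ t) = 0 ∧ pdy ω (γ t) = 0 := by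
    intro t
    have htan : Real.cos (θ t) * pdx ω (γ t) + Real.sin (θ t) * pdy ω (γ t) = 0 := by
      have h1 : (fun r => ω (γ r)) = fun _ => (1:ℝ) :=
        funext fun r => hωbdry _ (hfront r)
      have h2 := aux_deriv_comp γ θ hγsmooth hγderiv ω t (hωdiff t)
      rw [h1] at h2; simpa using h2.symm
    have hnor := hωNeumann t
    rw [nderiv] at hnor
    have hpy := sin_sq_add_cos_sq (θ t)
    constructor
    · linear_combination Real.cos (θ t) * htan + Real.sin (θ t) * hnor
        - pdx ω (γ t) * hpy
    · linear_combination Real.sin (θ t) * htan - Real.cos (θ t) * hnor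
        - pdy ω (γ t) * hpy
  -- Hessian constraints
  have hrow1 : Real.cos (θ s) * pdx (pdx ω) (γ s)
      + Real.sin (θ s) * pdy (pdx ω) (γ s) = 0 := by
    have h1 : (fun r => pdx ω (γ r)) = fun _ => (0:ℝ) :=
      funext fun r => (hgrad0 r).1
    have h2 := aux_deriv_comp γ θ hγsmooth hγderiv (pdx ω) s (hdxdiff _ (hmemU s))
    rw [h1] at h2; simpa using h2.symm
  have hrow2 : Real.cos (θ s) * pdx (pdy ω) (γ s)
      + Real.sin (θ s) * pdy (pdy ω) (γ s) = 0 := by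
    have h1 : (fun r => pdy ω (γ r)) = fun _ => (0:ℝ) :=
      funext fun r => (hgrad0 r).2
    have h2 := aux_deriv_comp γ θ hγsmooth hγderiv (pdy ω) s (hdydiff _ (hmemU s))
    rw [h1] at h2; simpa using h2.symm
  -- Laplacian at boundary
  have hlapcont : ContinuousAt (fun p => lap ω p + ω p) (γ s) := by
    have hC1 : ContDiffOn ℝ (⊤ : ℕ∞) (fderiv ℝ ω) U := hωC.fderiv_of_isOpen hUo (by simp)
    have hCx : ContDiffOn ℝ (⊤ : ℕ∞) (pdx ω) U := hC1.clm_apply contDiffOn_const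
    have hCy : ContDiffOn ℝ (⊤ : ℕ∞) (pdy ω) U := hC1.clm_apply contDiffOn_const
    have hCxx : ContDiffOn ℝ (⊤ : ℕ∞) (pdx (pdx ω)) U :=
      (hCx.fderiv_of_isOpen hUo (by simp)).clm_apply contDiffOn_const
    have hCyy : ContDiffOn ℝ (⊤ : ℕ∞) (pdy (pdy ω)) U :=
      (hCy.fderiv_of_isOpen hUo (by simp)).clm_apply contDiffOn_const
    have : ContinuousOn (fun p => lap ω p + ω p) U :=
      ((hCxx.continuousOn.add hCyy.continuousOn).add hωC.continuousOn)
    exact this.continuousAt (hUo.mem_nhds (hmemU s))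
  have hlap : lap ω (γ s) + ω (γ s) = 0 := by
    have hcl : γ s ∈ closure Om := frontier_subset_closure (hfront s)
    have hne : (nhdsWithin (γ s) Om).NeBot := mem_closure_iff_nhdsWithin_neBot.1 hcl
    have h1 : Filter.Tendsto (fun p => lap ω p + ω p) (nhdsWithin (γ s) Om)
        (nhds (lap ω (γ s) + ω (γ s))) := hlapcont.continuousWithinAt
    have h2 : Filter.Tendsto (fun p => lap ω p + ω p) (nhdsWithin (γ s) Om)
        (nhds 0) := by
      apply Filter.Tendsto.congr' _ tendsto_const_nhds
      filter_upwards [self_mem_nhdsWithin] with p hp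
      have := hωpde p hp; linarith
    exact tendsto_nhds_unique h1 h2
  have hω1 : ω (γ s) = 1 := hωbdry _ (hfront s)
  obtain ⟨hpx0, hpy0⟩ := hgrad0 s
  have h3 : pdx (pdx ω) (γ s) + pdy (pdy ω) (γ s) = -1 := by
    rw [hω1] at hlap; rw [lap] at hlap; linarith
  have h1 : Real.cos (θ s) * pdx (pdx ω) (γ s)
      + Real.sin (θ s) * pdx (pdy ω) (γ s) = 0 := by
    rw [hsymm _ (hmemU s)]; exact hrow1
  have h2 := hrow2
  have h4 : Real.sin (θ s) ^ 2 + Real.cos (θ s) ^ 2 = 1 := sin_sq_add_cos_sq (θ s)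
  have hA : pdx (pdx ω) (γ s) = -Real.sin (θ s) ^ 2 := by
    linear_combination Real.cos (θ s) * h1 - Real.sin (θ s) * h2
      + Real.sin (θ s) ^ 2 * h3 - pdx (pdx ω) (γ s) * h4
  have hC : pdy (pdy ω) (γ s) = -Real.cos (θ s) ^ 2 := by
    linear_combination h3 - hA + h4
  have hB : pdx (pdy ω) (γ s) = Real.sin (θ s) * Real.cos (θ s) := by
    linear_combination Real.sin (θ s) * h1 + Real.cos (θ s) * h2
      - Real.sin (θ s) * Real.cos (θ s) * h3 - pdx (pdy ω) (γ s) * h4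
  -- derivative of Rop ω at γ s
  have hA1 : HasFDerivAt (fun q : ℝ × ℝ => -q.2)
      (-(ContinuousLinearMap.snd ℝ ℝ ℝ)) (γ s) := (hasFDerivAt_snd).neg
  have hB1 : HasFDerivAt (pdx ω) (fderiv ℝ (pdx ω) (γ s)) (γ s) :=
    (hdxdiff _ (hmemU s)).hasFDerivAt
  have hC1 : HasFDerivAt (fun q : ℝ × ℝ => q.1)
      (ContinuousLinearMap.fst ℝ ℝ ℝ) (γ s) := hasFDerivAt_fst
  have hD1 : HasFDerivAt (pdy ω) (fderiv ℝ (pdy ω) (γ s)) (γ s) :=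
    (hdydiff _ (hmemU s)).hasFDerivAt
  have hR' : HasFDerivAt (Rop ω) _ (γ s) := (hA1.mul hB1).add (hC1.mul hD1)
  have hRx : pdx (Rop ω) (γ s)
      = -(γ s).2 * pdx (pdx ω) (γ s) + (γ s).1 * pdx (pdy ω) (γ s) := by
    rw [pdx, hR'.fderiv]
    simp only [ContinuousLinearMap.add_apply, ContinuousLinearMap.smul_apply,
      ContinuousLinearMap.neg_apply, ContinuousLinearMap.coe_snd',
      ContinuousLinearMap.coe_fst', smul_eq_mul]
    rw [hpx0, hpy0]
    show -(γ s).2 * pdx (pdx ω) (γ s) + 0 * _ + ((γ s).1 * pdx (pdy ω) (γ s) + 0 * _) = _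
    ring
  have hRy : pdy (Rop ω) (γ s)
      = -(γ s).2 * pdx (pdy ω) (γ s) + (γ s).1 * pdy (pdy ω) (γ s) := by
    rw [pdy, hR'.fderiv]
    simp only [ContinuousLinearMap.add_apply, ContinuousLinearMap.smul_apply,
      ContinuousLinearMap.neg_apply, ContinuousLinearMap.coe_snd',
      ContinuousLinearMap.coe_fst', smul_eq_mul]
    rw [hpx0, hpy0]
    show -(γ s).2 * pdy (pdx ω) (γ s) + 0 * _ + ((γ s).1 * pdy (pdy ω) (γ s) + 0 * _) = _
    rw [← hsymm _ (hmemU s)]; ring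
  -- derivative of r²
  have hr2 : deriv (fun t => (γ t).1 ^ 2 + (γ t).2 ^ 2) s
      = 2 * ((γ s).1 * Real.cos (θ s) + (γ s).2 * Real.sin (θ s)) := by
    have hγd : HasDerivAt γ (deriv γ s) s :=
      ((hγsmooth.differentiable (by simp)) s).hasDerivAt
    have hγ1 : HasDerivAt (fun t => (γ t).1) (Real.cos (θ s)) s := by
      have := (ContinuousLinearMap.fst ℝ ℝ ℝ).hasFDerivAt.comp_hasDerivAt s hγd
      rw [hγderiv s] at this; exact this
    have hγ2 : HasDerivAt (fun t => (γ t).2) (Real.sin (θ s)) s := by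
      have := (ContinuousLinearMap.snd ℝ ℝ ℝ).hasFDerivAt.comp_hasDerivAt s hγd
      rw [hγderiv s] at this; exact this
    have := ((hγ1.pow 2).add (hγ2.pow 2)).deriv
    rw [show (fun t => (γ t).1 ^ 2 + (γ t).2 ^ 2) = ((fun t => (γ t).1) ^ 2 + (fun t => (γ t).2) ^ 2) from rfl, this]; push_cast; ring
  constructor
  · rw [Rop, hpx0, hpy0]; ring
  · rw [nderiv, hRx, hRy, hr2]
    linear_combination (-(γ s).2 * Real.sin (θ s)) * hA
      + ((γ s).1 * Real.sin (θ s) + (γ s).2 * Real.cos (θ s)) * hB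
      + (-(γ s).1 * Real.cos (θ s)) * hC
      + ((γ s).1 * Real.cos (θ s) + (γ s).2 * Real.sin (θ s)) * h4
end
end

section
/- Let ω be a C^∞ solution of −Δω = μω in Ω with ∂ω/∂n = 0 and ω = c ≠ 0 on ∂Ω for some μ > 0, and let Rω = −y ω_x + x ω_y. Then for all real constants c₁, c₂, c₃, the boundary integral ∫_{∂Ω} ∂(c₁ ω_x + c₂ ω_y + c₃ Rω)/∂n ds = 0; consequently, if the function ∂(c₁ ω_x + c₂ ω_y + c₃ Rω)/∂n is not identically zero on ∂Ω, it changes sign, hence has at least two zeros along ∂Ω. -/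
noncomputable section
open Real MeasureTheory ComplexConjugate

abbrev smtop : WithTop ℕ∞ := ((⊤ : ℕ∞) : WithTop ℕ∞)

lemma clm_eval (D : (ℝ × ℝ) →L[ℝ] ℝ) (a b : ℝ) :
    D (a, b) = a * D (1, 0) + b * D (0, 1) := by
  have h : ((a, b) : ℝ × ℝ) = a • ((1:ℝ), (0:ℝ)) + b • ((0:ℝ), (1:ℝ)) := by
    simp [Prod.ext_iff]
  rw [h, map_add, _root_.map_smul, _root_.map_smul, smul_eq_mul, smul_eq_mul]

lemma aux_pos (L : ℝ) (hL : 0 < L) (F : ℝ → ℝ) (hF : Continuous F)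
    (hint : (∫ s in (0:ℝ)..L, F s) = 0) (hnn : ∀ s, 0 ≤ F s)
    (t : ℝ) (ht0 : 0 ≤ t) (htL : t < L) (htpos : 0 < F t) : False := by
  obtain ⟨δ, hδ, hball⟩ : ∃ δ > 0, ∀ u, |u - t| < δ → 0 < F u := by
    have hopen : IsOpen {u : ℝ | 0 < F u} := isOpen_lt continuous_const hF
    obtain ⟨δ, hδ, hsub⟩ := Metric.isOpen_iff.1 hopen t htpos
    exact ⟨δ, hδ, fun u hu => hsub (by simpa [Real.dist_eq] using hu)⟩
  set t' := min (t + δ) L with ht'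
  have htt' : t < t' := lt_min (by linarith) htL
  have ht'L : t' ≤ L := min_le_right _ _
  have h1 : (0:ℝ) ≤ ∫ s in (0:ℝ)..t, F s :=
    intervalIntegral.integral_nonneg ht0 (fun u _ => hnn u)
  have h3 : (0:ℝ) ≤ ∫ s in t'..L, F s :=
    intervalIntegral.integral_nonneg ht'L (fun u _ => hnn u)
  have h2 : (0:ℝ) < ∫ s in t..t', F s := by
    apply intervalIntegral.intervalIntegral_pos_of_pos_on
      (hF.intervalIntegrable _ _) _ htt'
    intro x hx
    apply hball
    have hxd : x - t < δ := by
      have h4 := hx.2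
      have : x < t + δ := lt_of_lt_of_le h4 (min_le_left _ _)
      linarith
    rw [abs_lt]; constructor <;> [linarith [hx.1]; linarith]
  have e1 : (∫ s in (0:ℝ)..t, F s) + (∫ s in t..t', F s) = ∫ s in (0:ℝ)..t', F s :=
    intervalIntegral.integral_add_adjacent_intervals (hF.intervalIntegrable _ _)
      (hF.intervalIntegrable _ _)
  have e2 : (∫ s in (0:ℝ)..t', F s) + (∫ s in t'..L, F s) = ∫ s in (0:ℝ)..L, F s :=
    intervalIntegral.integral_add_adjacent_intervals (hF.intervalIntegrable _ _)
      (hF.intervalIntegrable _ _)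
  linarith

lemma ivt_zero (F : ℝ → ℝ) (hF : Continuous F) {x y : ℝ} (hxy : x < y)
    (hsign : F x * F y < 0) : ∃ s ∈ Set.Ioo x y, F s = 0 := by
  rcases lt_or_ge (F x) 0 with hx | hx
  · have hy : 0 < F y := by nlinarith
    have h0 : (0:ℝ) ∈ Set.Ioo (F x) (F y) := ⟨hx, hy⟩
    obtain ⟨s, hs, hFs⟩ := intermediate_value_Ioo hxy.le hF.continuousOn h0
    exact ⟨s, hs, hFs⟩
  · have hx' : 0 < F x := by
      rcases hx.lt_or_eq with h | h
      · exact h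
      · exfalso; rw [← h] at hsign; simp at hsign
    have hy : F y < 0 := by nlinarith
    have h0 : (0:ℝ) ∈ Set.Ioo (F y) (F x) := ⟨hy, hx'⟩
    obtain ⟨s, hs, hFs⟩ := intermediate_value_Ioo' hxy.le hF.continuousOn h0
    exact ⟨s, hs, hFs⟩

lemma periodic_rep (L : ℝ) (hL : 0 < L) (F : ℝ → ℝ) (hper : Function.Periodic F L) (s : ℝ) :
    ∃ t, 0 ≤ t ∧ t < L ∧ F t = F s := by
  refine ⟨toIcoMod hL 0 s, (toIcoMod_mem_Ico' hL s).1, by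
    simpa using (toIcoMod_mem_Ico' hL s).2, ?_⟩
  rw [toIcoMod]
  exact hper.sub_zsmul_eq _

/-- For all real `c₁, c₂, c₃`, the boundary integral of
`∂(c₁ω_x + c₂ω_y + c₃Rω)/∂n` vanishes; hence, if that function is not
identically zero on `∂Ω`, it changes sign and so has at least two zeros
along `∂Ω`. -/
theorem boundary_integral_zero_and_sign_change
    (Om : Set (ℝ × ℝ)) (hopen : IsOpen Om) (hconn : IsConnected Om)
    (hbdd : Bornology.IsBounded Om)
    (L : ℝ) (hL : 0 < L)
    (γ : ℝ → ℝ × ℝ) (θ : ℝ → ℝ)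
    (hγsmooth : ContDiff ℝ (⊤ : ℕ∞) γ) (hθsmooth : ContDiff ℝ (⊤ : ℕ∞) θ)
    (hγper : ∀ s, γ (s + L) = γ s)
    (hθper : ∀ s, θ (s + L) = θ s + 2 * π)
    (hrange : Set.range γ = frontier Om)
    (hinj : Set.InjOn γ (Set.Ico 0 L))
    (hγderiv : ∀ s, deriv γ s = (Real.cos (θ s), Real.sin (θ s)))
    (ω : ℝ × ℝ → ℝ) (μ : ℝ) (c : ℝ) (hμpos : 0 < μ) (hc : c ≠ 0)
    (hωsmooth : SmoothNearClosure Om ω)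
    (hωpde : ∀ p ∈ Om, - lap ω p = μ * ω p)
    (hωNeumann : ∀ s, nderiv (θ s) ω (γ s) = 0)
    (hωbdry : ∀ p ∈ frontier Om, ω p = c)
    (c₁ c₂ c₃ : ℝ) :
    (∫ s in (0 : ℝ)..L,
        nderiv (θ s) (fun p => c₁ * pdx ω p + c₂ * pdy ω p + c₃ * Rop ω p) (γ s)) = 0
    ∧ (¬ (∀ s : ℝ,
          nderiv (θ s) (fun p => c₁ * pdx ω p + c₂ * pdy ω p + c₃ * Rop ω p) (γ s) = 0) →
        ((∃ a : ℝ,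
            0 < nderiv (θ a) (fun p => c₁ * pdx ω p + c₂ * pdy ω p + c₃ * Rop ω p) (γ a))
        ∧ (∃ b : ℝ,
            nderiv (θ b) (fun p => c₁ * pdx ω p + c₂ * pdy ω p + c₃ * Rop ω p) (γ b) < 0)
        ∧ (∃ s₁ s₂ : ℝ, γ s₁ ≠ γ s₂
            ∧ nderiv (θ s₁) (fun p => c₁ * pdx ω p + c₂ * pdy ω p + c₃ * Rop ω p) (γ s₁) = 0
            ∧ nderiv (θ s₂) (fun p => c₁ * pdx ω p + c₂ * pdy ω p + c₃ * Rop ω p) (γ s₂) = 0))) := by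
  have key : ∀ s, nderiv (θ s) (fun p => c₁ * pdx ω p + c₂ * pdy ω p + c₃ * Rop ω p) (γ s)
      = -(μ*c) * ((c₁ - c₃ * (γ s).2) * Real.sin (θ s)
          - (c₂ + c₃ * (γ s).1) * Real.cos (θ s)) := by
      obtain ⟨U, hUopen, hUcl, hsmω⟩ := hωsmooth
      have h1le : (1 : WithTop ℕ∞) ≤ smtop := WithTop.coe_le_coe.mpr le_top
      have h2le : (2 : WithTop ℕ∞) ≤ smtop := WithTop.coe_le_coe.mpr le_top
      have hsm : ContDiffOn ℝ smtop ω U := hsmω.of_le (by simp)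
      have hγfr : ∀ s, γ s ∈ frontier Om := fun s => hrange ▸ Set.mem_range_self s
      have hmemU : ∀ s, γ s ∈ U := fun s => hUcl (frontier_subset_closure (hγfr s))
      have hOmU : Om ⊆ U := subset_closure.trans hUcl
      -- smoothness of partial derivatives
      have hpdU : ∀ u : ℝ × ℝ → ℝ, ContDiffOn ℝ smtop u U →
          ContDiffOn ℝ smtop (pdx u) U ∧ ContDiffOn ℝ smtop (pdy u) U := by
        intro u hu
        have h' : ContDiffOn ℝ smtop (fun p => fderiv ℝ u p) U :=
          hu.fderiv_of_isOpen hUopen le_rfl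
        exact ⟨h'.clm_apply contDiffOn_const, h'.clm_apply contDiffOn_const⟩
      have hsm1x : ContDiffOn ℝ smtop (pdx ω) U := (hpdU ω hsm).1
      have hsm1y : ContDiffOn ℝ smtop (pdy ω) U := (hpdU ω hsm).2
      have hsm2xx : ContDiffOn ℝ smtop (pdx (pdx ω)) U := (hpdU _ hsm1x).1
      have hsm2yy : ContDiffOn ℝ smtop (pdy (pdy ω)) U := (hpdU _ hsm1y).2
      have hdiff : ∀ (u : ℝ × ℝ → ℝ), ContDiffOn ℝ smtop u U → ∀ s, DifferentiableAt ℝ u (γ s) :=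
        fun u hu s => (hu.contDiffAt (hUopen.mem_nhds (hmemU s))).differentiableAt (zero_lt_one.trans_le h1le).ne'
      -- chain rule along the boundary curve
      have hγd : ∀ s, HasDerivAt γ (Real.cos (θ s), Real.sin (θ s)) s := by
        intro s
        have h := (hγsmooth.differentiable (by simp) s).hasDerivAt
        rwa [hγderiv s] at h
      have hchain : ∀ (u : ℝ × ℝ → ℝ), ContDiffOn ℝ smtop u U → ∀ s,
          HasDerivAt (fun τ => u (γ τ))
            (Real.cos (θ s) * pdx u (γ s) + Real.sin (θ s) * pdy u (γ s)) s := by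
        intro u hu s
        have hud : HasFDerivAt u (fderiv ℝ u (γ s)) (γ s) := (hdiff u hu s).hasFDerivAt
        have h := hud.comp_hasDerivAt s (hγd s)
        rw [clm_eval] at h
        exact h
      have hconst_deriv : ∀ (u : ℝ × ℝ → ℝ) (k : ℝ), ContDiffOn ℝ smtop u U → (∀ s, u (γ s) = k) →
          ∀ s, Real.cos (θ s) * pdx u (γ s) + Real.sin (θ s) * pdy u (γ s) = 0 := by
        intro u k hu hk s
        have h1 := hchain u hu s
        have h2 : HasDerivAt (fun τ => u (γ τ)) 0 s := by
          have he : (fun τ => u (γ τ)) = fun _ => k := funext hk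
          rw [he]; exact hasDerivAt_const s k
        exact h1.unique h2
      -- gradient vanishes on the boundary
      have hgx : ∀ s, pdx ω (γ s) = 0 := by
        intro s
        have h1 := hconst_deriv ω c hsm (fun s => hωbdry _ (hγfr s)) s
        have h2 : Real.sin (θ s) * pdx ω (γ s) - Real.cos (θ s) * pdy ω (γ s) = 0 := hωNeumann s
        have h3 := Real.sin_sq_add_cos_sq (θ s)
        linear_combination Real.cos (θ s) * h1 + Real.sin (θ s) * h2 - pdx ω (γ s) * h3
      have hgy : ∀ s, pdy ω (γ s) = 0 := by
        intro s
        have h1 := hconst_deriv ω c hsm (fun s => hωbdry _ (hγfr s)) s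
        have h2 : Real.sin (θ s) * pdx ω (γ s) - Real.cos (θ s) * pdy ω (γ s) = 0 := hωNeumann s
        have h3 := Real.sin_sq_add_cos_sq (θ s)
        linear_combination Real.sin (θ s) * h1 - Real.cos (θ s) * h2 - pdy ω (γ s) * h3
      -- tangential derivatives of the gradient vanish
      have e1 : ∀ s, Real.cos (θ s) * pdx (pdx ω) (γ s) + Real.sin (θ s) * pdy (pdx ω) (γ s) = 0 :=
        hconst_deriv (pdx ω) 0 hsm1x hgx
      have e2 : ∀ s, Real.cos (θ s) * pdx (pdy ω) (γ s) + Real.sin (θ s) * pdy (pdy ω) (γ s) = 0 :=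
        hconst_deriv (pdy ω) 0 hsm1y hgy
      -- symmetry of second derivatives
      have hsymm : ∀ s, pdy (pdx ω) (γ s) = pdx (pdy ω) (γ s) := by
        intro s
        have hca : ContDiffAt ℝ smtop ω (γ s) := hsm.contDiffAt (hUopen.mem_nhds (hmemU s))
        have hsym := hca.isSymmSndFDerivAt (by rw [minSmoothness_of_isRCLikeNormedField]; exact h2le)
        have hd2 : DifferentiableAt ℝ (fderiv ℝ ω) (γ s) :=
          ((hsm.fderiv_of_isOpen (m := smtop) hUopen le_rfl).contDiffAt
            (hUopen.mem_nhds (hmemU s))).differentiableAt (zero_lt_one.trans_le h1le).ne'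
        have hx : pdy (pdx ω) (γ s) = fderiv ℝ (fderiv ℝ ω) (γ s) (0, 1) (1, 0) := by
          show fderiv ℝ (fun p => (fderiv ℝ ω p) ((fun _ : ℝ × ℝ => ((1:ℝ), (0:ℝ))) p)) (γ s) (0, 1) = _
          rw [fderiv_clm_apply hd2 (differentiableAt_const _)]
          simp
        have hy : pdx (pdy ω) (γ s) = fderiv ℝ (fderiv ℝ ω) (γ s) (1, 0) (0, 1) := by
          show fderiv ℝ (fun p => (fderiv ℝ ω p) ((fun _ : ℝ × ℝ => ((0:ℝ), (1:ℝ))) p)) (γ s) (1, 0) = _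
          rw [fderiv_clm_apply hd2 (differentiableAt_const _)]
          simp
        rw [hx, hy]
        exact hsym _ _
      -- the Laplacian on the boundary
      have hlapb : ∀ s, pdx (pdx ω) (γ s) + pdy (pdy ω) (γ s) = -(μ * c) := by
        intro s
        set g : ℝ × ℝ → ℝ := fun p => (pdx (pdx ω) p + pdy (pdy ω) p) + μ * ω p with hgdef
        have hgcont : ContinuousOn g U :=
          (hsm2xx.continuousOn.add hsm2yy.continuousOn).add
            (continuousOn_const.mul hsm.continuousOn)
        have hxcl : γ s ∈ closure Om := frontier_subset_closure (hγfr s)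
        have hca : ContinuousAt g (γ s) := hgcont.continuousAt (hUopen.mem_nhds (hmemU s))
        haveI : (nhdsWithin (γ s) Om).NeBot := mem_closure_iff_nhdsWithin_neBot.1 hxcl
        have ht1 : Filter.Tendsto g (nhdsWithin (γ s) Om) (nhds (g (γ s))) :=
          hca.tendsto.mono_left nhdsWithin_le_nhds
        have ht2 : Filter.Tendsto g (nhdsWithin (γ s) Om) (nhds 0) := by
          apply Filter.Tendsto.congr' _ tendsto_const_nhds
          filter_upwards [self_mem_nhdsWithin] with p hp
          have hp' := hωpde p hp
          simp only [lap] at hp'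
          simp only [hgdef]
          linarith
        have h0 : g (γ s) = 0 := tendsto_nhds_unique ht1 ht2
        have hωb : ω (γ s) = c := hωbdry _ (hγfr s)
        simp only [hgdef, hωb] at h0
        linarith
      -- Hessian entries on the boundary
      have hA : ∀ s, pdx (pdx ω) (γ s) = -(μ * c) * Real.sin (θ s) ^ 2 := by
        intro s
        have E1 := e1 s; have E2 := e2 s; have HS := hsymm s; have TR := hlapb s
        have P := Real.sin_sq_add_cos_sq (θ s)
        linear_combination Real.cos (θ s) * E1 - Real.sin (θ s) * E2
          - Real.sin (θ s) * Real.cos (θ s) * HS + Real.sin (θ s) ^ 2 * TR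
          - pdx (pdx ω) (γ s) * P
      have hC : ∀ s, pdy (pdy ω) (γ s) = -(μ * c) * Real.cos (θ s) ^ 2 := by
        intro s
        have E1 := e1 s; have E2 := e2 s; have HS := hsymm s; have TR := hlapb s
        have P := Real.sin_sq_add_cos_sq (θ s)
        linear_combination - Real.cos (θ s) * E1 + Real.sin (θ s) * E2
          + Real.sin (θ s) * Real.cos (θ s) * HS + Real.cos (θ s) ^ 2 * TR
          - pdy (pdy ω) (γ s) * P
      have hB : ∀ s, pdy (pdx ω) (γ s) = (μ * c) * Real.sin (θ s) * Real.cos (θ s) := by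
        intro s
        have E1 := e1 s; have E2 := e2 s; have HS := hsymm s; have TR := hlapb s
        have P := Real.sin_sq_add_cos_sq (θ s)
        linear_combination Real.sin (θ s) * E1 + Real.cos (θ s) * E2
          + Real.cos (θ s) ^ 2 * HS - Real.sin (θ s) * Real.cos (θ s) * TR
          - pdy (pdx ω) (γ s) * P
      have hB' : ∀ s, pdx (pdy ω) (γ s) = (μ * c) * Real.sin (θ s) * Real.cos (θ s) := by
        intro s; rw [← hsymm s]; exact hB s
      -- the key pointwise formula
      intro s
      have hmem := hUopen.mem_nhds (hmemU s)
      have hd1 : HasFDerivAt (pdx ω) (fderiv ℝ (pdx ω) (γ s)) (γ s) :=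
        (hdiff _ hsm1x s).hasFDerivAt
      have hd2 : HasFDerivAt (pdy ω) (fderiv ℝ (pdy ω) (γ s)) (γ s) :=
        (hdiff _ hsm1y s).hasFDerivAt
      set p := γ s with hpdef
      set D1 := fderiv ℝ (pdx ω) p with hD1
      set D2 := fderiv ℝ (pdy ω) p with hD2
      have hprod1 : HasFDerivAt (fun q : ℝ × ℝ => -q.2 * pdx ω q)
          ((-p.2) • D1 + (pdx ω p) • (-(ContinuousLinearMap.snd ℝ ℝ ℝ))) p :=
        (hasFDerivAt_snd.neg).mul hd1
      have hprod2 : HasFDerivAt (fun q : ℝ × ℝ => q.1 * pdy ω q)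
          ((p.1) • D2 + (pdy ω p) • (ContinuousLinearMap.fst ℝ ℝ ℝ)) p :=
        hasFDerivAt_fst.mul hd2
      have hv : HasFDerivAt (fun q => c₁ * pdx ω q + c₂ * pdy ω q + c₃ * Rop ω q)
          ((c₁ • D1 + c₂ • D2) + c₃ • (((-p.2) • D1 + (pdx ω p) • (-(ContinuousLinearMap.snd ℝ ℝ ℝ)))
            + ((p.1) • D2 + (pdy ω p) • (ContinuousLinearMap.fst ℝ ℝ ℝ)))) p := by
        exact ((hd1.const_mul c₁).add (hd2.const_mul c₂)).add ((hprod1.add hprod2).const_mul c₃)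
      set bigD := ((c₁ • D1 + c₂ • D2) + c₃ • (((-p.2) • D1 + (pdx ω p) • (-(ContinuousLinearMap.snd ℝ ℝ ℝ)))
            + ((p.1) • D2 + (pdy ω p) • (ContinuousLinearMap.fst ℝ ℝ ℝ)))) with hbigD
      have hpx : pdx (fun q => c₁ * pdx ω q + c₂ * pdy ω q + c₃ * Rop ω q) p = bigD (1, 0) := by
        show fderiv ℝ (fun q => c₁ * pdx ω q + c₂ * pdy ω q + c₃ * Rop ω q) p (1, 0) = _
        rw [hv.fderiv]
      have hpy : pdy (fun q => c₁ * pdx ω q + c₂ * pdy ω q + c₃ * Rop ω q) p = bigD (0, 1) := by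
        show fderiv ℝ (fun q => c₁ * pdx ω q + c₂ * pdy ω q + c₃ * Rop ω q) p (0, 1) = _
        rw [hv.fderiv]
      have hval1 : bigD (1, 0) = c₁ * (pdx (pdx ω) p) + c₂ * (pdx (pdy ω) p)
          + c₃ * (-p.2 * (pdx (pdx ω) p) + p.1 * (pdx (pdy ω) p)) + c₃ * pdy ω p := by
        simp only [hbigD, ContinuousLinearMap.add_apply, ContinuousLinearMap.smul_apply,
          ContinuousLinearMap.neg_apply, ContinuousLinearMap.coe_snd', ContinuousLinearMap.coe_fst', smul_eq_mul]
        have : D1 (1, 0) = pdx (pdx ω) p := rfl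
        rw [this]
        have : D2 (1, 0) = pdx (pdy ω) p := rfl
        rw [this]
        ring
      have hval2 : bigD (0, 1) = c₁ * (pdy (pdx ω) p) + c₂ * (pdy (pdy ω) p)
          + c₃ * (-p.2 * (pdy (pdx ω) p) + p.1 * (pdy (pdy ω) p)) - c₃ * pdx ω p := by
        simp only [hbigD, ContinuousLinearMap.add_apply, ContinuousLinearMap.smul_apply,
          ContinuousLinearMap.neg_apply, ContinuousLinearMap.coe_snd', ContinuousLinearMap.coe_fst', smul_eq_mul]
        have : D1 (0, 1) = pdy (pdx ω) p := rfl
        rw [this]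
        have : D2 (0, 1) = pdy (pdy ω) p := rfl
        rw [this]
        ring
      have hAp : pdx (pdx ω) p = -(μ * c) * Real.sin (θ s) ^ 2 := hA s
      have hBp : pdy (pdx ω) p = (μ * c) * Real.sin (θ s) * Real.cos (θ s) := hB s
      have hB'p : pdx (pdy ω) p = (μ * c) * Real.sin (θ s) * Real.cos (θ s) := hB' s
      have hCp : pdy (pdy ω) p = -(μ * c) * Real.cos (θ s) ^ 2 := hC s
      have hgxp : pdx ω p = 0 := hgx s
      have hgyp : pdy ω p = 0 := hgy s
      show Real.sin (θ s) * pdx _ p - Real.cos (θ s) * pdy _ p = _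
      rw [hpx, hpy, hval1, hval2, hAp, hBp, hB'p, hCp, hgxp, hgyp]
      have P := Real.sin_sq_add_cos_sq (θ s)
      linear_combination (-(μ * c) * ((c₁ - c₃ * p.2) * Real.sin (θ s)
        - (c₂ + c₃ * p.1) * Real.cos (θ s))) * P
  set F' : ℝ → ℝ := fun s => -(μ*c) * ((c₁ - c₃ * (γ s).2) * Real.sin (θ s)
      - (c₂ + c₃ * (γ s).1) * Real.cos (θ s)) with hF'def
  have key' : ∀ s, nderiv (θ s) (fun p => c₁ * pdx ω p + c₂ * pdy ω p + c₃ * Rop ω p) (γ s)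
      = F' s := key
  have hγcont : Continuous γ := hγsmooth.continuous
  have hθcont : Continuous θ := hθsmooth.continuous
  have hF'cont : Continuous F' := by
    apply Continuous.mul continuous_const
    exact ((continuous_const.sub (continuous_const.mul (continuous_snd.comp hγcont))).mul
        (Real.continuous_sin.comp hθcont)).sub
      ((continuous_const.add (continuous_const.mul (continuous_fst.comp hγcont))).mul
        (Real.continuous_cos.comp hθcont))
  have hγd : ∀ s, HasDerivAt γ (Real.cos (θ s), Real.sin (θ s)) s := by
    intro s
    have h := (hγsmooth.differentiable (by simp) s).hasDerivAt
    rwa [hγderiv s] at h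
  have hγ1 : ∀ s, HasDerivAt (fun τ => (γ τ).1) (Real.cos (θ s)) s := by
    intro s
    have h := (ContinuousLinearMap.fst ℝ ℝ ℝ).hasFDerivAt.comp_hasDerivAt s (hγd s)
    exact h
  have hγ2 : ∀ s, HasDerivAt (fun τ => (γ τ).2) (Real.sin (θ s)) s := by
    intro s
    have h := (ContinuousLinearMap.snd ℝ ℝ ℝ).hasFDerivAt.comp_hasDerivAt s (hγd s)
    exact h
  set G : ℝ → ℝ := fun s => -(μ*c) * (c₁ * (γ s).2 - c₂ * (γ s).1
      - c₃ * (((γ s).1 ^ 2 + (γ s).2 ^ 2) / 2)) with hGdef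
  have hGd : ∀ s, HasDerivAt G (F' s) s := by
    intro s
    have h := ((((hγ2 s).const_mul c₁).sub ((hγ1 s).const_mul c₂)).sub
      (((((hγ1 s).pow 2).add ((hγ2 s).pow 2)).div_const 2).const_mul c₃)).const_mul (-(μ*c))
    refine h.congr_deriv ?_
    simp only [hF'def]
    ring
  have hGper : G L = G 0 := by
    have h0 : γ L = γ 0 := by simpa using hγper 0
    simp only [hGdef, h0]
  have hint : (∫ s in (0:ℝ)..L, F' s) = 0 := by
    rw [intervalIntegral.integral_eq_sub_of_hasDerivAt (fun s _ => hGd s)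
      (hF'cont.intervalIntegrable 0 L), hGper, sub_self]
  have hIgoal : (∫ s in (0:ℝ)..L,
      nderiv (θ s) (fun p => c₁ * pdx ω p + c₂ * pdy ω p + c₃ * Rop ω p) (γ s)) = 0 := by
    have hcongr : (∫ s in (0:ℝ)..L,
        nderiv (θ s) (fun p => c₁ * pdx ω p + c₂ * pdy ω p + c₃ * Rop ω p) (γ s))
        = ∫ s in (0:ℝ)..L, F' s :=
      intervalIntegral.integral_congr (fun s _ => key' s)
    rw [hcongr]; exact hint
  refine ⟨hIgoal, ?_⟩
  intro hnot
  have hex : ∃ s₀, F' s₀ ≠ 0 := by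
    by_contra hno; push_neg at hno
    exact hnot (fun s => by rw [key' s, hno s])
  obtain ⟨s₀, hs₀⟩ := hex
  have hper : Function.Periodic F' L := by
    intro s
    simp only [hF'def, hγper s, hθper s, Real.sin_add_two_pi, Real.cos_add_two_pi]
  obtain ⟨t, ht0, htL, htF⟩ := periodic_rep L hL F' hper s₀
  have htne : F' t ≠ 0 := by rw [htF]; exact hs₀
  have hboth : (∃ a, 0 < F' a) ∧ (∃ b, F' b < 0) := by
    rcases lt_trichotomy (F' t) 0 with hlt | h0 | hgt
    · refine ⟨?_, ⟨t, hlt⟩⟩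
      by_contra hno; push_neg at hno
      exact aux_pos L hL (fun s => -F' s) hF'cont.neg
        (by rw [intervalIntegral.integral_neg, hint]; ring) (fun s => neg_nonneg.mpr (hno s))
        t ht0 htL (neg_pos.mpr hlt)
    · exact absurd h0 htne
    · refine ⟨⟨t, hgt⟩, ?_⟩
      by_contra hno; push_neg at hno
      exact aux_pos L hL F' hF'cont hint (fun s => hno s) t ht0 htL hgt
  obtain ⟨⟨a, ha⟩, ⟨b, hb⟩⟩ := hboth
  refine ⟨⟨a, by rw [key' a]; exact ha⟩, ⟨b, by rw [key' b]; exact hb⟩, ?_⟩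
  obtain ⟨a', ha0, haL, haF⟩ := periodic_rep L hL F' hper a
  obtain ⟨b', hb0, hbL, hbF⟩ := periodic_rep L hL F' hper b
  have haF' : 0 < F' a' := by rw [haF]; exact ha
  have hbF' : F' b' < 0 := by rw [hbF]; exact hb
  have hne : a' ≠ b' := by
    intro h; rw [h] at haF'; linarith
  set x := min a' b' with hxdef
  set y := max a' b' with hydef
  have hxy : x < y := min_lt_max.mpr hne
  have hx0 : 0 ≤ x := le_min ha0 hb0
  have hyL : y < L := max_lt haL hbL
  have hsignxy : F' x * F' y < 0 := by
    rcases le_total a' b' with h | h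
    · rw [hxdef, hydef, min_eq_left h, max_eq_right h]
      exact mul_neg_of_pos_of_neg haF' hbF'
    · rw [hxdef, hydef, min_eq_right h, max_eq_left h]
      exact mul_neg_of_neg_of_pos hbF' haF'
  obtain ⟨s₁, hs₁mem, hs₁⟩ := ivt_zero F' hF'cont hxy hsignxy
  have hxy2 : y < x + L := by linarith
  have hsign2 : F' y * F' (x + L) < 0 := by
    rw [hper x, mul_comm]; exact hsignxy
  obtain ⟨s₂, hs₂mem, hs₂⟩ := ivt_zero F' hF'cont hxy2 hsign2
  rcases lt_or_ge s₂ L with hcase | hcase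
  · refine ⟨s₁, s₂, ?_, by rw [key' s₁]; exact hs₁, by rw [key' s₂]; exact hs₂⟩
    intro heq
    have h := hinj (Set.mem_Ico.mpr ⟨by linarith [hs₁mem.1], by linarith [hs₁mem.2]⟩)
      (Set.mem_Ico.mpr ⟨by linarith [hs₂mem.1], hcase⟩) heq
    linarith [hs₁mem.2, hs₂mem.1]
  · have hzero2 : F' (s₂ - L) = 0 := by
      have h := hper (s₂ - L)
      rw [sub_add_cancel] at h
      rw [← h]; exact hs₂
    refine ⟨s₁, s₂ - L, ?_, by rw [key' s₁]; exact hs₁, by rw [key' (s₂ - L)]; exact hzero2⟩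
    intro heq
    have h := hinj (Set.mem_Ico.mpr ⟨by linarith [hs₁mem.1], by linarith [hs₁mem.2]⟩)
      (Set.mem_Ico.mpr ⟨by linarith, by linarith [hs₂mem.2]⟩) heq
    linarith [hs₁mem.1, hs₂mem.2]
end
end
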